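/- arXiv:1904.06999 — 9 statements merged into one kernel-verified Lean document; each statement's English description precedes it below -/
import Mathlib

section
/- Any loopy multigraph whose degree sequence is graphical can be transformed into a simple graph by a finite sequence of admissible double edge swaps. -/
open Finset

/-- A loopy multigraph on vertex set `V`: each unordered pair (possibly a loop)
has a multiplicity. -/
abbrev Multigraph (V : Type*) := Sym2 V → ℕ

variable {V : Type*}

/-- The degree of a vertex: each incident edge counts with multiplicity,
and a loop counts twice. -/
def mdeg [Fintype V] (G : Multigraph V) (v : V) : ℕ :=
  (∑ u : V, G s(v, u)) + G s(v, v)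

/-- A multigraph is simple if it has no loops and every multiplicity is at most one. -/
def IsSimpleMG (G : Multigraph V) : Prop :=
  (∀ v : V, G s(v, v) = 0) ∧ ∀ e : Sym2 V, G e ≤ 1

/-- A multigraph is loop-free if it has no loops. -/
def LoopFree (G : Multigraph V) : Prop := ∀ v : V, G s(v, v) = 0

/-- A degree function is graphical if it is realized by some simple graph. -/
def GraphicalDeg [Fintype V] (d : V → ℕ) : Prop :=
  ∃ H : Multigraph V, IsSimpleMG H ∧ ∀ v : V, mdeg H v = d v

/-- The result of the double edge swap removing one copy each of `{v1,v2}` and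
`{v3,v4}` and adding one copy each of `{v2,v3}` and `{v4,v1}`. -/
def swapped [DecidableEq V] (G : Multigraph V) (v1 v2 v3 v4 : V) : Multigraph V :=
  fun e => G e - (if e = s(v1, v2) then 1 else 0) - (if e = s(v3, v4) then 1 else 0)
    + (if e = s(v2, v3) then 1 else 0) + (if e = s(v4, v1) then 1 else 0)

/-- The edges `{v1,v2}` and `{v3,v4}` share no vertex. -/
def NotIncident (v1 v2 v3 v4 : V) : Prop :=
  v1 ≠ v3 ∧ v1 ≠ v4 ∧ v2 ≠ v3 ∧ v2 ≠ v4

/-- One admissible double edge swap: the two removed edges exist, are not incident,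
and at least one of them is a loop or has multiplicity at least two. -/
def AdmissibleStep [DecidableEq V] (G G' : Multigraph V) : Prop :=
  ∃ v1 v2 v3 v4 : V, NotIncident v1 v2 v3 v4 ∧
    1 ≤ G s(v1, v2) ∧ 1 ≤ G s(v3, v4) ∧
    (v1 = v2 ∨ v3 = v4 ∨ 2 ≤ G s(v1, v2) ∨ 2 ≤ G s(v3, v4)) ∧
    G' = swapped G v1 v2 v3 v4

lemma exU_neg [Fintype V] [DecidableEq V] (g : V → ℤ) (x : V) (h : ∑ u, g u < g x) :
    ∃ z, z ≠ x ∧ g z < 0 := by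
  have heq := Finset.sum_erase_add Finset.univ g (Finset.mem_univ x)
  have h2 : ∑ u ∈ Finset.univ.erase x, g u < 0 := by linarith
  by_contra hc; push_neg at hc
  have : (0:ℤ) ≤ ∑ u ∈ Finset.univ.erase x, g u :=
    Finset.sum_nonneg fun i hi => hc i (Finset.mem_erase.mp hi).1
  linarith

lemma exU_pos [Fintype V] [DecidableEq V] (g : V → ℤ) (x : V) (h : g x < ∑ u, g u) :
    ∃ w, w ≠ x ∧ 0 < g w := by
  obtain ⟨z, hz, h0⟩ := exU_neg (fun u => -g u) x (by simp; linarith)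
  exact ⟨z, hz, by linarith⟩

lemma exU_neg2 [Fintype V] [DecidableEq V] (g : V → ℤ) (a b : V) (hab : a ≠ b)
    (h : ∑ u, g u < g a + g b) : ∃ z, z ≠ a ∧ z ≠ b ∧ g z < 0 := by
  have h1 := Finset.sum_erase_add Finset.univ g (Finset.mem_univ a)
  have h2 := Finset.sum_erase_add (Finset.univ.erase a) g
    (Finset.mem_erase.mpr ⟨hab.symm, Finset.mem_univ b⟩)
  have h3 : ∑ u ∈ (Finset.univ.erase a).erase b, g u < 0 := by linarith
  by_contra hc; push_neg at hc
  have : (0:ℤ) ≤ ∑ u ∈ (Finset.univ.erase a).erase b, g u := by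
    refine Finset.sum_nonneg fun i hi => ?_
    have hi' := Finset.mem_erase.mp hi
    have hi'' := Finset.mem_erase.mp hi'.2
    exact hc i hi''.1 hi'.1
  linarith

lemma sym2_left_eq [DecidableEq V] (a b u : V) : (s(a,u) = s(a,b)) ↔ u = b := by
  rw [Sym2.eq_iff]
  constructor
  · rintro (⟨-, h⟩ | ⟨h1, h2⟩)
    · exact h
    · rw [h2, h1]
  · intro h; exact Or.inl ⟨rfl, h⟩

lemma sym2_right_eq [DecidableEq V] (a b u : V) : (s(b,u) = s(a,b)) ↔ u = a := by
  rw [Sym2.eq_iff]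
  constructor
  · rintro (⟨h1, h2⟩ | ⟨-, h⟩)
    · rw [h2, h1]
    · exact h
  · intro h; exact Or.inr ⟨rfl, h⟩

lemma cnt [Fintype V] [DecidableEq V] (a b v : V) :
    ((∑ u : V, if s(v,u) = s(a,b) then (1:ℕ) else 0) + if s(v,v) = s(a,b) then 1 else 0)
    = (if v = a then 1 else 0) + (if v = b then 1 else 0) := by
  by_cases hva : v = a
  · subst hva
    simp only [sym2_left_eq]
    by_cases hab : v = b <;> simp [hab, Finset.sum_ite_eq']
  · by_cases hvb : v = b
    · subst hvb
      simp only [sym2_right_eq]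
      simp [Ne.symm hva, hva, Finset.sum_ite_eq']
    · have : ∀ u, ¬ (s(v,u) = s(a,b)) := by
        intro u h
        rw [Sym2.eq_iff] at h
        rcases h with ⟨h1, -⟩ | ⟨h1, -⟩ <;> [exact hva h1; exact hvb h1]
      simp [this, hva, hvb]

lemma sym2_ne_of {a b c d : V} (h1 : ¬(a = c ∧ b = d)) (h2 : ¬(a = d ∧ b = c)) :
    s(a,b) ≠ s(c,d) := by
  intro h; rw [Sym2.eq_iff] at h; tauto

def Dd [Fintype V] [DecidableEq V] (G H : Multigraph V) : ℕ :=
  ∑ e : Sym2 V, Nat.dist (G e) (H e)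

lemma nat_dist_def (a b : ℕ) : Nat.dist a b = a - b + (b - a) := rfl

lemma swapped_add [DecidableEq V] (G : Multigraph V) (v1 v2 v3 v4 : V)
    (h12 : s(v1,v2) ≠ s(v3,v4)) (h1 : 1 ≤ G s(v1,v2)) (h2 : 1 ≤ G s(v3,v4)) (e : Sym2 V) :
    swapped G v1 v2 v3 v4 e + ((if e = s(v1,v2) then 1 else 0) + (if e = s(v3,v4) then 1 else 0))
      = G e + ((if e = s(v2,v3) then 1 else 0) + (if e = s(v4,v1) then 1 else 0)) := by
  unfold swapped
  set a := (if e = s(v2,v3) then (1:ℕ) else 0) with ha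
  set b := (if e = s(v4,v1) then (1:ℕ) else 0) with hb
  rcases eq_or_ne e s(v1,v2) with h | h <;> rcases eq_or_ne e s(v3,v4) with h' | h'
  · subst h; exact absurd h' h12
  · subst h; simp [h']; omega
  · subst h'; simp [h]; omega
  · simp [h, h']; omega

lemma mdeg_swapped [Fintype V] [DecidableEq V] (G : Multigraph V) (v1 v2 v3 v4 : V)
    (hni : NotIncident v1 v2 v3 v4) (h1 : 1 ≤ G s(v1,v2)) (h2 : 1 ≤ G s(v3,v4)) (v : V) :
    mdeg (swapped G v1 v2 v3 v4) v = mdeg G v := by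
  obtain ⟨n13, n14, n23, n24⟩ := hni
  have h12 : s(v1,v2) ≠ s(v3,v4) := sym2_ne_of (fun h => n13 h.1) (fun h => n14 h.1)
  have key := swapped_add G v1 v2 v3 v4 h12 h1 h2
  have big : (∑ u, swapped G v1 v2 v3 v4 s(v,u)) +
      ((∑ u, if s(v,u) = s(v1,v2) then 1 else 0) + (∑ u, if s(v,u) = s(v3,v4) then 1 else 0))
      = (∑ u, G s(v,u)) +
      ((∑ u, if s(v,u) = s(v2,v3) then 1 else 0) + (∑ u, if s(v,u) = s(v4,v1) then 1 else 0)) := by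
    rw [← Finset.sum_add_distrib, ← Finset.sum_add_distrib, ← Finset.sum_add_distrib,
      ← Finset.sum_add_distrib]
    exact Finset.sum_congr rfl fun u _ => key s(v,u)
  have bigl := key s(v,v)
  have c1 := cnt v1 v2 v
  have c2 := cnt v3 v4 v
  have c3 := cnt v2 v3 v
  have c4 := cnt v4 v1 v
  unfold mdeg
  omega

lemma dist_swap_lt [Fintype V] [DecidableEq V] (G H : Multigraph V) (v1 v2 v3 v4 : V)
    (hni : NotIncident v1 v2 v3 v4)
    (h1 : H s(v1,v2) < G s(v1,v2)) (h2 : H s(v3,v4) < G s(v3,v4))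
    (h3 : G s(v2,v3) < H s(v2,v3)) :
    Dd (swapped G v1 v2 v3 v4) H < Dd G H := by
  obtain ⟨n13, n14, n23, n24⟩ := hni
  have ne12 : s(v1,v2) ≠ s(v3,v4) := sym2_ne_of (fun h => n13 h.1) (fun h => n14 h.1)
  have ne13 : s(v1,v2) ≠ s(v2,v3) := by apply sym2_ne_of <;> rintro ⟨h1,h2⟩ <;> tauto
  have ne14 : s(v1,v2) ≠ s(v4,v1) := by apply sym2_ne_of <;> rintro ⟨h1,h2⟩ <;> tauto
  have ne23 : s(v3,v4) ≠ s(v2,v3) := by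
    apply sym2_ne_of <;> rintro ⟨h1,h2⟩ <;> [exact n23 h1.symm; exact n24 h2.symm]
  have ne24 : s(v3,v4) ≠ s(v4,v1) := by
    apply sym2_ne_of <;> rintro ⟨h1,h2⟩ <;> [exact n14 h2.symm; exact n13 h1.symm]
  by_cases hl : v1 = v2 ∧ v3 = v4
  · -- e3 = e4
    obtain ⟨hv12, hv34⟩ := hl
    have h34 : s(v2,v3) = s(v4,v1) := by rw [Sym2.eq_iff]; right; exact ⟨hv12.symm, hv34⟩
    have key : ∀ e : Sym2 V, Nat.dist (swapped G v1 v2 v3 v4 e) (H e) +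
        ((if e = s(v1,v2) then 1 else 0) + (if e = s(v3,v4) then 1 else 0))
        ≤ Nat.dist (G e) (H e) := by
      intro e
      unfold swapped
      rcases eq_or_ne e s(v1,v2) with rfl | he1
      · simp [ne12, ne13, ne14, nat_dist_def]; omega
      · rcases eq_or_ne e s(v3,v4) with rfl | he2
        · simp [Ne.symm ne12, ne23, ne24, nat_dist_def]; omega
        · rcases eq_or_ne e s(v2,v3) with rfl | he3
          · simp [Ne.symm ne13, Ne.symm ne23, ← h34, nat_dist_def]; omega
          · have he4 : e ≠ s(v4,v1) := h34 ▸ he3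
            simp [he1, he2, he3, he4]
    have hsum := Finset.sum_le_sum (fun e (_ : e ∈ Finset.univ) => key e)
    rw [Finset.sum_add_distrib, Finset.sum_add_distrib] at hsum
    simp only [Finset.sum_ite_eq' Finset.univ, Finset.mem_univ, if_true] at hsum
    unfold Dd
    omega
  · have h34 : s(v2,v3) ≠ s(v4,v1) := by
      apply sym2_ne_of <;> rintro ⟨h1,h2⟩ <;> [exact n24 h1; exact hl ⟨h1.symm, h2⟩]
    have key : ∀ e : Sym2 V, Nat.dist (swapped G v1 v2 v3 v4 e) (H e) +
        ((if e = s(v1,v2) then 1 else 0) + (if e = s(v3,v4) then 1 else 0) +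
          (if e = s(v2,v3) then 1 else 0))
        ≤ Nat.dist (G e) (H e) + (if e = s(v4,v1) then 1 else 0) := by
      intro e
      unfold swapped
      rcases eq_or_ne e s(v1,v2) with rfl | he1
      · simp [ne12, ne13, ne14, nat_dist_def]; omega
      · rcases eq_or_ne e s(v3,v4) with rfl | he2
        · simp [Ne.symm ne12, ne23, ne24, nat_dist_def]; omega
        · rcases eq_or_ne e s(v2,v3) with rfl | he3
          · simp [Ne.symm ne13, Ne.symm ne23, h34, nat_dist_def]; omega
          · rcases eq_or_ne e s(v4,v1) with rfl | he4
            · simp [Ne.symm ne14, Ne.symm ne24, Ne.symm h34, nat_dist_def]; omega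
            · simp [he1, he2, he3, he4]
    have hsum := Finset.sum_le_sum (fun e (_ : e ∈ Finset.univ) => key e)
    rw [Finset.sum_add_distrib, Finset.sum_add_distrib, Finset.sum_add_distrib,
      Finset.sum_add_distrib] at hsum
    simp only [Finset.sum_ite_eq' Finset.univ, Finset.mem_univ, if_true] at hsum
    unfold Dd
    omega

def Fdiff (G H : Multigraph V) (a b : V) : ℤ := (G s(a,b) : ℤ) - H s(a,b)

lemma Fdiff_symm (G H : Multigraph V) (a b : V) : Fdiff G H a b = Fdiff G H b a := by
  unfold Fdiff; rw [Sym2.eq_swap]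

lemma Fdiff_pos (G H : Multigraph V) (a b : V) :
    0 < Fdiff G H a b ↔ H s(a,b) < G s(a,b) := by unfold Fdiff; omega

lemma Fdiff_neg (G H : Multigraph V) (a b : V) :
    Fdiff G H a b < 0 ↔ G s(a,b) < H s(a,b) := by unfold Fdiff; omega

lemma row_sum [Fintype V] [DecidableEq V] (G H : Multigraph V) (hH : IsSimpleMG H)
    (hdeg : ∀ v, mdeg H v = mdeg G v) (v : V) :
    ∑ u, Fdiff G H v u = -(G s(v,v) : ℤ) := by
  have hd := hdeg v
  unfold mdeg at hd
  unfold Fdiff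
  rw [Finset.sum_sub_distrib]
  have hl := hH.1 v
  have c1 : ((∑ u, H s(v,u) : ℕ) : ℤ) = ∑ u, (H s(v,u) : ℤ) := by push_cast; ring
  have c2 : ((∑ u, G s(v,u) : ℕ) : ℤ) = ∑ u, (G s(v,u) : ℤ) := by push_cast; ring
  omega

lemma step1a [Fintype V] [DecidableEq V] (G H : Multigraph V) (hH : IsSimpleMG H)
    (hdeg : ∀ v, mdeg H v = mdeg G v) (y x : V) (h : 0 < Fdiff G H y x) :
    ∃ z, z ≠ x ∧ z ≠ y ∧ Fdiff G H y z < 0 := by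
  obtain ⟨z, hzx, hz⟩ := exU_neg (Fdiff G H y) x (by rw [row_sum G H hH hdeg y]; omega)
  refine ⟨z, hzx, fun h' => ?_, hz⟩
  subst h'
  unfold Fdiff at hz
  rw [hH.1 z] at hz
  omega

lemma step2 [Fintype V] [DecidableEq V] (G H : Multigraph V) (hH : IsSimpleMG H)
    (hdeg : ∀ v, mdeg H v = mdeg G v) (z x : V) (h : Fdiff G H z x < 0) :
    ∃ w, w ≠ x ∧ 0 < Fdiff G H z w := by
  by_cases hz : 0 < Fdiff G H z z
  · exact ⟨z, fun h' => by rw [h'] at h hz; omega, hz⟩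
  · apply exU_pos
    rw [row_sum G H hH hdeg z]
    have hzz : Fdiff G H z z = (G s(z,z) : ℤ) := by unfold Fdiff; rw [hH.1 z]; omega
    omega

lemma step1b [Fintype V] [DecidableEq V] (G H : Multigraph V) (hH : IsSimpleMG H)
    (hdeg : ∀ v, mdeg H v = mdeg G v) (x a b : V) (hab : a ≠ b)
    (ha : 0 < Fdiff G H x a) (hb : 0 < Fdiff G H x b) :
    ∃ z, z ≠ a ∧ z ≠ b ∧ z ≠ x ∧ Fdiff G H x z < 0 := by
  obtain ⟨z, hza, hzb, hz⟩ := exU_neg2 (Fdiff G H x) a b hab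
    (by rw [row_sum G H hH hdeg x]; omega)
  refine ⟨z, hza, hzb, fun h' => ?_, hz⟩
  subst h'
  unfold Fdiff at hz
  rw [hH.1 z] at hz
  omega

lemma descent [Fintype V] [DecidableEq V] (G H : Multigraph V)
    (hH : IsSimpleMG H) (hdeg : ∀ v, mdeg H v = mdeg G v) (hns : ¬ IsSimpleMG G) :
    (∃ G', AdmissibleStep G G' ∧ (∀ v, mdeg H v = mdeg G' v) ∧ Dd G' H < Dd G H) ∨
    (∃ H', IsSimpleMG H' ∧ (∀ v, mdeg H' v = mdeg G v) ∧ Dd G H' < Dd G H) := by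
  by_cases hsw : ∃ v1 v2 v3 v4 : V, NotIncident v1 v2 v3 v4 ∧
      (v1 = v2 ∨ v3 = v4 ∨ 2 ≤ G s(v1,v2) ∨ 2 ≤ G s(v3,v4)) ∧
      H s(v1,v2) < G s(v1,v2) ∧ H s(v3,v4) < G s(v3,v4) ∧ G s(v2,v3) < H s(v2,v3)
  · left
    obtain ⟨v1,v2,v3,v4,hni,hadm,h1,h2,h3⟩ := hsw
    refine ⟨swapped G v1 v2 v3 v4, ⟨v1,v2,v3,v4,hni, by omega, by omega, hadm, rfl⟩, ?_,
      dist_swap_lt G H v1 v2 v3 v4 hni h1 h2 h3⟩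
    intro v
    rw [mdeg_swapped G v1 v2 v3 v4 hni (by omega) (by omega) v]
    exact hdeg v
  · right
    push_neg at hsw
    -- G is loop-free
    have hLF : ∀ v, G s(v,v) = 0 := by
      intro x
      by_contra hx
      have hx1 : 0 < Fdiff G H x x := by unfold Fdiff; rw [hH.1 x]; omega
      obtain ⟨z, hzx, -, hz⟩ := step1a G H hH hdeg x x hx1
      have hzrev : Fdiff G H z x < 0 := by rw [Fdiff_symm]; exact hz
      obtain ⟨w, hwx, hw⟩ := step2 G H hH hdeg z x hzrev
      have hc := hsw x x z w ⟨Ne.symm hzx, Ne.symm hwx, Ne.symm hzx, Ne.symm hwx⟩ (Or.inl rfl)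
        (by rw [hH.1 x]; omega) ((Fdiff_pos G H z w).mp hw)
      have := (Fdiff_neg G H x z).mp hz
      omega
    -- a multi-edge
    have hme : ∃ x y : V, x ≠ y ∧ 2 ≤ G s(x,y) := by
      have hex : ∃ e, 2 ≤ G e := by
        by_contra h; push_neg at h
        exact hns ⟨hLF, fun e => by have := h e; omega⟩
      obtain ⟨e, he⟩ := hex
      induction e using Sym2.ind with
      | _ x y =>
        refine ⟨x, y, fun h => ?_, he⟩
        subst h
        rw [hLF x] at he
        omega
    obtain ⟨x, y, hxy, hGxy⟩ := hme
    have hFxy : 0 < Fdiff G H x y := by unfold Fdiff; have := hH.2 s(x,y); omega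
    have hFyx : 0 < Fdiff G H y x := by rw [Fdiff_symm]; exact hFxy
    obtain ⟨z, hzx, hzy, hz⟩ := step1a G H hH hdeg y x hFyx
    have hz_out : ∀ u, u ≠ x → u ≠ y → Fdiff G H z u ≤ 0 := by
      intro u hux huy
      by_contra hu; push_neg at hu
      have hc := hsw x y z u ⟨Ne.symm hzx, Ne.symm hux, Ne.symm hzy, Ne.symm huy⟩
        (Or.inr (Or.inr (Or.inl hGxy)))
        (by have := hH.2 s(x,y); omega) ((Fdiff_pos G H z u).mp hu)
      have := (Fdiff_neg G H y z).mp hz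
      omega
    have hzxpos : 0 < Fdiff G H z x := by
      by_contra hcon; push_neg at hcon
      have hall : ∀ u ∈ (Finset.univ : Finset V), Fdiff G H z u ≤ (fun _ => (0:ℤ)) u := by
        intro u _
        rcases eq_or_ne u x with rfl | hux
        · exact hcon
        rcases eq_or_ne u y with rfl | huy
        · have h2 : Fdiff G H z u < 0 := by rw [Fdiff_symm]; exact hz
          exact le_of_lt h2
        · exact hz_out u hux huy
      have hstrict : ∑ u, Fdiff G H z u < ∑ _u : V, (0:ℤ) :=
        Finset.sum_lt_sum hall ⟨y, Finset.mem_univ y,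
          by show Fdiff G H z y < (0:ℤ); rw [Fdiff_symm]; exact hz⟩
      rw [row_sum G H hH hdeg z, hLF z] at hstrict
      simp at hstrict
    have hxzpos : 0 < Fdiff G H x z := by rw [Fdiff_symm]; exact hzxpos
    -- mirror side
    obtain ⟨z', hz'y, hz'x, hz'⟩ := step1a G H hH hdeg x y hFxy
    have hGyx : 2 ≤ G s(y,x) := by rw [show s(y,x) = s(x,y) from Sym2.eq_swap]; exact hGxy
    have hz'_out : ∀ u, u ≠ x → u ≠ y → Fdiff G H z' u ≤ 0 := by
      intro u hux huy
      by_contra hu; push_neg at hu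
      have hc := hsw y x z' u ⟨Ne.symm hz'y, Ne.symm huy, Ne.symm hz'x, Ne.symm hux⟩
        (Or.inr (Or.inr (Or.inl hGyx)))
        (by have := hH.2 s(y,x); omega) ((Fdiff_pos G H z' u).mp hu)
      have := (Fdiff_neg G H x z').mp hz'
      omega
    have hz'ypos : 0 < Fdiff G H z' y := by
      by_contra hcon; push_neg at hcon
      have hall : ∀ u ∈ (Finset.univ : Finset V), Fdiff G H z' u ≤ (fun _ => (0:ℤ)) u := by
        intro u _
        rcases eq_or_ne u y with rfl | huy
        · exact hcon
        rcases eq_or_ne u x with rfl | hux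
        · have h2 : Fdiff G H z' u < 0 := by rw [Fdiff_symm]; exact hz'
          exact le_of_lt h2
        · exact hz'_out u hux huy
      have hstrict : ∑ u, Fdiff G H z' u < ∑ _u : V, (0:ℤ) :=
        Finset.sum_lt_sum hall ⟨x, Finset.mem_univ x,
          by show Fdiff G H z' x < (0:ℤ); rw [Fdiff_symm]; exact hz'⟩
      rw [row_sum G H hH hdeg z', hLF z'] at hstrict
      simp at hstrict
    have hyz'pos : 0 < Fdiff G H y z' := by rw [Fdiff_symm]; exact hz'ypos
    have hzz' : z ≠ z' := by
      intro h
      rw [h, Fdiff_symm] at hz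
      omega
    -- H has no edge between x and z
    have hHxz : H s(x,z) = 0 := by
      by_contra hc
      have hGxz : 2 ≤ G s(x,z) := by
        have h1 := hH.2 s(x,z)
        unfold Fdiff at hxzpos
        omega
      obtain ⟨z₀, hz₀y, hz₀z, hz₀x, hz₀⟩ :=
        step1b G H hH hdeg x y z (Ne.symm hzy) hFxy hxzpos
      have hz₀' : Fdiff G H z₀ x < 0 := by rw [Fdiff_symm]; exact hz₀
      obtain ⟨w₀, hw₀x, hw₀⟩ := step2 G H hH hdeg z₀ x hz₀'
      rcases eq_or_ne w₀ z with rfl | hw₀z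
      · have h2 := hz_out z₀ hz₀x hz₀y
        rw [Fdiff_symm G H z₀ w₀] at hw₀
        omega
      · have hc2 := hsw z x z₀ w₀ ⟨Ne.symm hz₀z, Ne.symm hw₀z, Ne.symm hz₀x, Ne.symm hw₀x⟩
          (Or.inr (Or.inr (Or.inl (by rw [show s(z,x) = s(x,z) from Sym2.eq_swap]; exact hGxz))))
          (by rw [show s(z,x) = s(x,z) from Sym2.eq_swap]; have := hH.2 s(x,z); omega)
          ((Fdiff_pos G H z₀ w₀).mp hw₀)
        have := (Fdiff_neg G H x z₀).mp hz₀
        omega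
    -- H has no edge between y and z'
    have hHyz' : H s(y,z') = 0 := by
      by_contra hc
      have hGyz' : 2 ≤ G s(y,z') := by
        have h1 := hH.2 s(y,z')
        unfold Fdiff at hyz'pos
        omega
      obtain ⟨z₀, hz₀x, hz₀z', hz₀y, hz₀⟩ :=
        step1b G H hH hdeg y x z' (Ne.symm hz'x) hFyx hyz'pos
      have hz₀' : Fdiff G H z₀ y < 0 := by rw [Fdiff_symm]; exact hz₀
      obtain ⟨w₀, hw₀y, hw₀⟩ := step2 G H hH hdeg z₀ y hz₀'
      rcases eq_or_ne w₀ z' with rfl | hw₀z'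
      · have h2 := hz'_out z₀ hz₀x hz₀y
        rw [Fdiff_symm G H z₀ w₀] at hw₀
        omega
      · have hc2 := hsw z' y z₀ w₀ ⟨Ne.symm hz₀z', Ne.symm hw₀z', Ne.symm hz₀y, Ne.symm hw₀y⟩
          (Or.inr (Or.inr (Or.inl (by rw [show s(z',y) = s(y,z') from Sym2.eq_swap]; exact hGyz'))))
          (by rw [show s(z',y) = s(y,z') from Sym2.eq_swap]; have := hH.2 s(y,z'); omega)
          ((Fdiff_pos G H z₀ w₀).mp hw₀)
        have := (Fdiff_neg G H y z₀).mp hz₀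
        omega
    -- numeric facts
    have hHyz : H s(y,z) = 1 ∧ G s(y,z) = 0 := by
      have h1 := hH.2 s(y,z)
      have h2 := (Fdiff_neg G H y z).mp hz
      omega
    have hHxz' : H s(x,z') = 1 ∧ G s(x,z') = 0 := by
      have h1 := hH.2 s(x,z')
      have h2 := (Fdiff_neg G H x z').mp hz'
      omega
    have hGxz1 : 1 ≤ G s(x,z) := by
      have := (Fdiff_pos G H x z).mp hxzpos; omega
    have hGyz'1 : 1 ≤ G s(y,z') := by
      have := (Fdiff_pos G H y z').mp hyz'pos; omega
    have hHzx : H s(z,x) = 0 := by rw [show s(z,x) = s(x,z) from Sym2.eq_swap]; exact hHxz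
    have hHz'y : H s(z',y) = 0 := by rw [show s(z',y) = s(y,z') from Sym2.eq_swap]; exact hHyz'
    have hGzx1 : 1 ≤ G s(z,x) := by rw [show s(z,x) = s(x,z) from Sym2.eq_swap]; exact hGxz1
    have hGz'y1 : 1 ≤ G s(z',y) := by rw [show s(z',y) = s(y,z') from Sym2.eq_swap]; exact hGyz'1
    -- edge distinctness
    have m12 : s(y,z) ≠ s(x,z') := by apply sym2_ne_of <;> rintro ⟨h1,h2⟩ <;> tauto
    have m13 : s(y,z) ≠ s(z,x) := by apply sym2_ne_of <;> rintro ⟨h1,h2⟩ <;> tauto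
    have m14 : s(y,z) ≠ s(z',y) := by
      apply sym2_ne_of <;> rintro ⟨h1,h2⟩ <;> [exact hzy h2; exact hzz' h2]
    have m23 : s(x,z') ≠ s(z,x) := by apply sym2_ne_of <;> rintro ⟨h1,h2⟩ <;> tauto
    have m24 : s(x,z') ≠ s(z',y) := by apply sym2_ne_of <;> rintro ⟨h1,h2⟩ <;> tauto
    have m34 : s(z,x) ≠ s(z',y) := by apply sym2_ne_of <;> rintro ⟨h1,h2⟩ <;> tauto
    have hni' : NotIncident y z x z' := ⟨Ne.symm hxy, Ne.symm hz'y, hzx, hzz'⟩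
    refine ⟨swapped H y z x z', ⟨?_, ?_⟩, ?_, ?_⟩
    · -- loop-free
      intro v
      have hne : ∀ (a b : V), a ≠ b → s(v,v) ≠ s(a,b) := by
        intro a b hab h
        rw [Sym2.eq_iff] at h
        rcases h with ⟨h1,h2⟩|⟨h1,h2⟩ <;> [exact hab (h1.symm.trans h2); exact hab (h2.symm.trans h1)]
      unfold swapped
      rw [if_neg (hne y z (Ne.symm hzy)), if_neg (hne x z' (Ne.symm hz'x)),
        if_neg (hne z x hzx), if_neg (hne z' y hz'y), hH.1 v]
    · -- multiplicities at most one
      intro e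
      unfold swapped
      rcases eq_or_ne e s(y,z) with rfl | he1
      · simp [m12, m13, m14]
        have := hH.2 s(y,z); omega
      rcases eq_or_ne e s(x,z') with rfl | he2
      · simp [Ne.symm m12, m23, m24, he1]
        have := hH.2 s(x,z'); omega
      rcases eq_or_ne e s(z,x) with rfl | he3
      · simp [he1, he2, m34, hHzx]
      rcases eq_or_ne e s(z',y) with rfl | he4
      · simp [he1, he2, he3, hHz'y]
      · simp [he1, he2, he3, he4]
        exact hH.2 e
    · -- degrees
      intro v
      rw [mdeg_swapped H y z x z' hni' (by omega) (by omega) v]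
      exact hdeg v
    · -- distance decreases
      unfold Dd
      refine Finset.sum_lt_sum (fun e _ => ?_) ⟨s(y,z), Finset.mem_univ _, ?_⟩
      · unfold swapped
        rcases eq_or_ne e s(y,z) with rfl | he1
        · simp [m12, m13, m14, nat_dist_def]; omega
        rcases eq_or_ne e s(x,z') with rfl | he2
        · simp [Ne.symm m12, m23, m24, he1, nat_dist_def]; omega
        rcases eq_or_ne e s(z,x) with rfl | he3
        · simp [he1, he2, m34, hHzx, nat_dist_def]; omega
        rcases eq_or_ne e s(z',y) with rfl | he4
        · simp [he1, he2, he3, hHz'y, nat_dist_def]; omega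
        · simp [he1, he2, he3, he4]
      · unfold swapped
        simp [m12, m13, m14, nat_dist_def]
        omega

/-- Any loopy multigraph whose degree sequence is graphical can be
transformed into a simple graph by a finite sequence of admissible double edge swaps. -/
theorem loopy_multigraph_reaches_simple [Fintype V] [DecidableEq V]
    (G : Multigraph V) (hgr : GraphicalDeg (mdeg G)) :
    ∃ G' : Multigraph V, Relation.ReflTransGen AdmissibleStep G G' ∧ IsSimpleMG G' := by
  obtain ⟨H, hHs, hHd⟩ := hgr
  suffices h : ∀ n : ℕ, ∀ G H : Multigraph V, IsSimpleMG H → (∀ v, mdeg H v = mdeg G v) →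
      Dd G H ≤ n → ∃ G' : Multigraph V, Relation.ReflTransGen AdmissibleStep G G' ∧ IsSimpleMG G' by
    exact h (Dd G H) G H hHs hHd le_rfl
  intro n
  induction n with
  | zero =>
    intro G H hs hd h0
    have hGH : ∀ e, G e = H e := by
      intro e
      have h1 : ∀ e ∈ (Finset.univ : Finset (Sym2 V)), Nat.dist (G e) (H e) = 0 :=
        Finset.sum_eq_zero_iff.mp (Nat.le_zero.mp h0)
      have := h1 e (Finset.mem_univ e)
      rw [nat_dist_def] at this
      omega
    exact ⟨G, Relation.ReflTransGen.refl,
      ⟨fun v => by rw [hGH]; exact hs.1 v, fun e => by rw [hGH]; exact hs.2 e⟩⟩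
  | succ n ih =>
    intro G H hs hd hle
    by_cases hG : IsSimpleMG G
    · exact ⟨G, Relation.ReflTransGen.refl, hG⟩
    rcases descent G H hs hd hG with ⟨G', hstep, hd', hlt⟩ | ⟨H', hs', hd', hlt⟩
    · obtain ⟨G'', hpath, hsimp⟩ := ih G' H hs hd' (by omega)
      exact ⟨G'', Relation.ReflTransGen.head hstep hpath, hsimp⟩
    · exact ih G H' hs' hd' (by omega)
end

section
/- In a loopy multigraph with a graphical degree sequence, if some vertex v carries a loop, then there exists an edge {v1,v2} not incident to v; swapping the loop at v with this edge (i.e., replacing the loop (v,v) and edge (v1,v2) by edges (v,v1) and (v,v2)) strictly decreases the total number of loops without creating any new loop. -/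
open Finset

variable {V : Type*}

/-- The total number of loops of a multigraph. -/
def numLoops [Fintype V] (G : Multigraph V) : ℕ := ∑ v : V, G s(v, v)

/-- If a loopy multigraph with graphical degree sequence has a loop at `v`,
then there is an edge `{v1,v2}` not incident to `v`, and swapping the loop at `v` with it
(replacing the loop `(v,v)` and `(v1,v2)` by `(v,v1)` and `(v,v2)`) strictly decreases
the number of loops without creating any new loop. -/
theorem loop_swap_decreases_loops [Fintype V] [DecidableEq V]
    (G : Multigraph V) (hgr : GraphicalDeg (mdeg G)) (v : V) (hv : 1 ≤ G s(v, v)) :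
    ∃ v1 v2 : V, v1 ≠ v ∧ v2 ≠ v ∧ 1 ≤ G s(v1, v2) ∧
      numLoops (swapped G v v v1 v2) < numLoops G ∧
      ∀ w : V, swapped G v v v1 v2 s(w, w) ≤ G s(w, w) := by
  have key : ∃ v1 v2 : V, v1 ≠ v ∧ v2 ≠ v ∧ 1 ≤ G s(v1, v2) := by
    by_contra h
    push_neg at h
    have hz : ∀ a b : V, a ≠ v → b ≠ v → G s(a, b) = 0 := by
      intro a b ha hb
      have := h a b ha hb
      omega
    obtain ⟨H, ⟨hHl, hH1⟩, hd⟩ := hgr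
    have hdegu : ∀ u : V, u ≠ v → mdeg G u = G s(u, v) := by
      intro u hu
      unfold mdeg
      rw [hz u u hu hu, add_zero]
      rw [Finset.sum_eq_single v]
      · intro b _ hb; exact hz u b hu hb
      · intro hv'; exact absurd (Finset.mem_univ v) hv'
    have hdegv : mdeg G v = 2 * G s(v, v) + ∑ u ∈ univ.erase v, G s(u, v) := by
      unfold mdeg
      rw [← Finset.add_sum_erase _ _ (Finset.mem_univ v)]
      have hc : ∀ u ∈ univ.erase v, G s(v, u) = G s(u, v) := by
        intro u _; rw [Sym2.eq_swap]
      rw [Finset.sum_congr rfl hc]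
      ring
    have hHv : mdeg H v ≤ ∑ u ∈ univ.erase v, mdeg H u := by
      have h1 : mdeg H v = ∑ u ∈ univ.erase v, H s(v, u) := by
        unfold mdeg
        rw [hHl v, add_zero, ← Finset.add_sum_erase _ _ (Finset.mem_univ v), hHl v, zero_add]
      rw [h1]
      apply Finset.sum_le_sum
      intro u hu
      calc H s(v, u) = H s(u, v) := by rw [Sym2.eq_swap]
        _ ≤ ∑ w : V, H s(u, w) :=
            Finset.single_le_sum (f := fun w => H s(u, w)) (fun _ _ => Nat.zero_le _) (Finset.mem_univ v)
        _ ≤ mdeg H u := Nat.le_add_right _ _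
    have hGle : mdeg G v ≤ ∑ u ∈ univ.erase v, G s(u, v) := by
      calc mdeg G v = mdeg H v := (hd v).symm
        _ ≤ ∑ u ∈ univ.erase v, mdeg H u := hHv
        _ = ∑ u ∈ univ.erase v, G s(u, v) := by
            apply Finset.sum_congr rfl
            intro u hu
            rw [hd u, hdegu u (Finset.ne_of_mem_erase hu)]
    omega
  obtain ⟨v1, v2, h1, h2, hge⟩ := key
  have hloop : ∀ w : V, swapped G v v v1 v2 s(w, w)
      = G s(w, w) - (if w = v then 1 else 0) - (if s(w, w) = s(v1, v2) then 1 else 0) := by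
    intro w
    unfold swapped
    have e1 : (s(w, w) = s(v, v)) ↔ w = v := by
      rw [Sym2.eq_iff]; tauto
    have e2 : ¬(s(w, w) = s(v, v1)) := by
      rw [Sym2.eq_iff]; rintro (⟨rfl, rfl⟩ | ⟨rfl, rfl⟩) <;> exact h1 rfl
    have e3 : ¬(s(w, w) = s(v2, v)) := by
      rw [Sym2.eq_iff]; rintro (⟨rfl, rfl⟩ | ⟨rfl, rfl⟩) <;> exact h2 rfl
    simp only [e2, e3, if_false, add_zero]
    by_cases hwv : w = v
    · simp [e1, hwv]
    · simp [e1, hwv]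
  have hle : ∀ w : V, swapped G v v v1 v2 s(w, w) ≤ G s(w, w) := by
    intro w
    rw [hloop w]
    split_ifs <;> omega
  refine ⟨v1, v2, h1, h2, hge, ?_, hle⟩
  unfold numLoops
  apply Finset.sum_lt_sum (fun w _ => hle w)
  refine ⟨v, Finset.mem_univ v, ?_⟩
  rw [hloop v, if_pos rfl]
  split_ifs <;> omega
end

section
/- Let G and H be loop-free multigraphs on the same vertex set with identical vertex degrees, and let e = {u1,v1} be an edge of G whose multiplicity in G exceeds its multiplicity in H. Then there exists an edge e' of G not incident to e such that performing a double edge swap on e and e' strictly decreases the total distance from G to H, where the total distance is the sum over all unordered vertex pairs of the absolute difference between the multiplicities in G and H. -/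
open Finset

variable {V : Type*}

/-- The total distance between two multigraphs: the sum over all unordered pairs of
the absolute difference of multiplicities. -/
def totalDist [Fintype V] [DecidableEq V] (G H : Multigraph V) : ℕ :=
  ∑ e : Sym2 V, ((G e : ℤ) - (H e : ℤ)).natAbs

lemma swap_lt [Fintype V] [DecidableEq V] (G H : Multigraph V)
    (u1 v1 v3 v4 : V)
    (h12 : u1 ≠ v1) (h34 : v3 ≠ v4) (hni : NotIncident u1 v1 v3 v4)
    (h1 : (H s(u1,v1) : ℤ) < G s(u1,v1))
    (h2 : (H s(v3,v4) : ℤ) < G s(v3,v4))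
    (h3 : (G s(v1,v3) : ℤ) < H s(v1,v3) ∨ (G s(v4,u1) : ℤ) < H s(v4,u1)) :
    totalDist (swapped G u1 v1 v3 v4) H < totalDist G H := by
  obtain ⟨n13, n14, n23, n24⟩ := hni
  have d12 : s(u1,v1) ≠ s(v3,v4) := by
    rw [Ne, Sym2.eq_iff]; rintro (⟨h,h'⟩|⟨h,h'⟩) <;> simp_all
  have d13 : s(u1,v1) ≠ s(v1,v3) := by
    rw [Ne, Sym2.eq_iff]; rintro (⟨h,h'⟩|⟨h,h'⟩) <;> simp_all
  have d14 : s(u1,v1) ≠ s(v4,u1) := by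
    rw [Ne, Sym2.eq_iff]; rintro (⟨h,h'⟩|⟨h,h'⟩) <;> simp_all
  have d23 : s(v3,v4) ≠ s(v1,v3) := by
    rw [Ne, Sym2.eq_iff]; rintro (⟨h,h'⟩|⟨h,h'⟩) <;> simp_all
  have d24 : s(v3,v4) ≠ s(v4,u1) := by
    rw [Ne, Sym2.eq_iff]; rintro (⟨h,h'⟩|⟨h,h'⟩) <;> simp_all
  have d34 : s(v1,v3) ≠ s(v4,u1) := by
    rw [Ne, Sym2.eq_iff]; rintro (⟨h,h'⟩|⟨h,h'⟩) <;> simp_all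
  have hw1 : swapped G u1 v1 v3 v4 s(u1,v1) = G s(u1,v1) - 1 := by
    simp [swapped, d12, d13, d14]
  have hw2 : swapped G u1 v1 v3 v4 s(v3,v4) = G s(v3,v4) - 1 := by
    simp [swapped, d12.symm, d23, d24]
  have hw3 : swapped G u1 v1 v3 v4 s(v1,v3) = G s(v1,v3) + 1 := by
    simp [swapped, d13.symm, d23.symm, d34]
  have hw4 : swapped G u1 v1 v3 v4 s(v4,u1) = G s(v4,u1) + 1 := by
    simp [swapped, d14.symm, d24.symm, d34.symm]
  have hsub : ∀ e : Sym2 V,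
      e ∉ ({s(u1,v1), s(v3,v4), s(v1,v3), s(v4,u1)} : Finset (Sym2 V)) →
      swapped G u1 v1 v3 v4 e = G e := by
    intro e he
    simp only [Finset.mem_insert, Finset.mem_singleton, not_or] at he
    obtain ⟨a1, a2, a3, a4⟩ := he
    simp [swapped, a1, a2, a3, a4]
  have hcast : (totalDist (swapped G u1 v1 v3 v4) H : ℤ) - (totalDist G H : ℤ)
      = ∑ e ∈ ({s(u1,v1), s(v3,v4), s(v1,v3), s(v4,u1)} : Finset (Sym2 V)),
          ((((swapped G u1 v1 v3 v4 e : ℤ) - H e).natAbs : ℤ)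
            - (((G e : ℤ) - H e).natAbs : ℤ)) := by
    rw [totalDist, totalDist, Nat.cast_sum, Nat.cast_sum, ← Finset.sum_sub_distrib]
    exact (Finset.sum_subset (Finset.subset_univ _)
      (fun e _ he => by rw [hsub e he]; ring)).symm
  rw [Finset.sum_insert (by simp [d12, d13, d14]),
      Finset.sum_insert (by simp [d23, d24]),
      Finset.sum_insert (by simp [d34]),
      Finset.sum_singleton, hw1, hw2, hw3, hw4] at hcast
  rcases h3 with h3 | h3 <;> omega

lemma half [Fintype V] (G H : Multigraph V) (hG : LoopFree G) (hH : LoopFree H)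
    (hsum0 : ∀ x : V, ∑ w : V, ((G s(x,w) : ℤ) - H s(x,w)) = 0)
    (x y : V) (hxy : x ≠ y) (hlt : (H s(x,y):ℤ) < G s(x,y))
    (hA : ∀ a w, (G s(y,a):ℤ) < H s(y,a) → w ≠ x → (G s(a,w):ℤ) ≤ H s(a,w)) :
    (∑ w : V, max 0 ((H s(y,w):ℤ) - G s(y,w))) + 1
      ≤ ∑ w : V, max 0 ((H s(x,w):ℤ) - G s(x,w)) := by
  classical
  set D := Finset.univ.filter (fun a : V => (G s(y,a):ℤ) < H s(y,a)) with hD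
  have step1 : ∀ a ∈ D, ((H s(y,a):ℤ) - G s(y,a)) ≤ (G s(x,a):ℤ) - H s(x,a) := by
    intro a ha
    rw [hD, Finset.mem_filter] at ha
    have hdef := ha.2
    have hs := hsum0 a
    rw [← Finset.add_sum_erase _ _ (Finset.mem_univ x)] at hs
    have hymem : y ∈ Finset.univ.erase x :=
      Finset.mem_erase.mpr ⟨Ne.symm hxy, Finset.mem_univ y⟩
    rw [← Finset.add_sum_erase _ _ hymem] at hs
    have hrest : ∑ w ∈ (Finset.univ.erase x).erase y, ((G s(a,w):ℤ) - H s(a,w)) ≤ 0 :=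
      Finset.sum_nonpos (fun w hw => by
        have hwx : w ≠ x := (Finset.mem_erase.mp (Finset.mem_erase.mp hw).2).1
        have := hA a w hdef hwx
        linarith)
    rw [show s(a,x) = s(x,a) from Sym2.eq_swap,
        show s(a,y) = s(y,a) from Sym2.eq_swap] at hs
    linarith
  have hDy : y ∉ D := by
    rw [hD, Finset.mem_filter]
    simp [hG y, hH y]
  have hbound : ∑ w : V, max 0 ((H s(y,w):ℤ) - G s(y,w))
      = ∑ a ∈ D, ((H s(y,a):ℤ) - G s(y,a)) := by
    have h1 : ∑ w : V, max 0 ((H s(y,w):ℤ) - G s(y,w))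
        = ∑ a ∈ D, max 0 ((H s(y,a):ℤ) - G s(y,a)) :=
      (Finset.sum_subset (Finset.filter_subset _ _) (fun w _ hw => by
        rw [Finset.mem_filter] at hw
        push_neg at hw
        have h2 : (H s(y,w):ℤ) - G s(y,w) ≤ 0 := by
          have := hw (Finset.mem_univ w); linarith
        exact max_eq_left h2)).symm
    rw [h1]
    refine Finset.sum_congr rfl (fun a ha => ?_)
    rw [hD, Finset.mem_filter] at ha
    exact max_eq_right (by linarith [ha.2])
  have hpn : ∑ w : V, max 0 ((H s(x,w):ℤ) - G s(x,w))
      = ∑ w : V, max 0 ((G s(x,w):ℤ) - H s(x,w)) := by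
    have key : ∀ w : V, max 0 ((G s(x,w):ℤ) - H s(x,w))
        - max 0 ((H s(x,w):ℤ) - G s(x,w)) = (G s(x,w):ℤ) - H s(x,w) := by
      intro w
      rcases le_total ((G s(x,w):ℤ) - H s(x,w)) 0 with h|h
      · rw [max_eq_left h, max_eq_right (by linarith)]; ring
      · rw [max_eq_right h, max_eq_left (by linarith)]; ring
    have h0 : ∑ w : V, (max 0 ((G s(x,w):ℤ) - H s(x,w))
        - max 0 ((H s(x,w):ℤ) - G s(x,w))) = 0 := by
      simp only [key]; exact hsum0 x
    rw [Finset.sum_sub_distrib] at h0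
    linarith
  have h1 : ∑ a ∈ insert y D, ((G s(x,a):ℤ) - H s(x,a))
      ≤ ∑ a ∈ insert y D, max 0 ((G s(x,a):ℤ) - H s(x,a)) :=
    Finset.sum_le_sum (fun a _ => le_max_right 0 _)
  have h2 : ∑ a ∈ insert y D, max 0 ((G s(x,a):ℤ) - H s(x,a))
      ≤ ∑ w : V, max 0 ((G s(x,w):ℤ) - H s(x,w)) :=
    Finset.sum_le_sum_of_subset_of_nonneg (Finset.subset_univ _)
      (fun w _ _ => le_max_left 0 _)
  rw [Finset.sum_insert hDy] at h1
  have hfinal : ∑ a ∈ D, ((H s(y,a):ℤ) - G s(y,a))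
      ≤ ∑ a ∈ D, ((G s(x,a):ℤ) - H s(x,a)) := Finset.sum_le_sum step1
  have hone : (H s(x,y):ℤ) + 1 ≤ G s(x,y) := hlt
  rw [hbound, hpn]
  linarith

/-- If `G` and `H` are loop-free multigraphs with the same degrees and
`e = {u1,v1}` has larger multiplicity in `G` than in `H`, then there is an edge of `G`
not incident to `e` such that a double edge swap on the two strictly decreases the
total distance to `H`. -/
theorem swap_decreases_totalDist [Fintype V] [DecidableEq V]
    (G H : Multigraph V) (hG : LoopFree G) (hH : LoopFree H)
    (hdeg : ∀ x : V, mdeg G x = mdeg H x)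
    (u1 v1 : V) (he : H s(u1, v1) < G s(u1, v1)) :
    ∃ v3 v4 : V, NotIncident u1 v1 v3 v4 ∧ 1 ≤ G s(v3, v4) ∧
      totalDist (swapped G u1 v1 v3 v4) H < totalDist G H := by
  classical
  have hne : u1 ≠ v1 := by
    rintro rfl
    rw [hG u1] at he
    omega
  have heZ : (H s(u1,v1) : ℤ) < G s(u1,v1) := by exact_mod_cast he
  have hsum0 : ∀ x : V, ∑ w : V, ((G s(x,w) : ℤ) - H s(x,w)) = 0 := by
    intro x
    have h1 := hdeg x
    unfold mdeg at h1
    rw [hG x, hH x] at h1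
    have h2 : ∑ u : V, G s(x,u) = ∑ u : V, H s(x,u) := by omega
    have h3 : (∑ u : V, (G s(x,u):ℤ)) = ∑ u : V, (H s(x,u):ℤ) := by exact_mod_cast h2
    rw [Finset.sum_sub_distrib, h3, sub_self]
  by_contra hcon
  push_neg at hcon
  have factA : ∀ a w, (G s(v1,a):ℤ) < H s(v1,a) → w ≠ u1 →
      (G s(a,w):ℤ) ≤ H s(a,w) := by
    intro a w hdef hwu
    by_contra hsur
    push_neg at hsur
    have hau : a ≠ u1 := by
      rintro rfl
      rw [show s(v1,a) = s(a,v1) from Sym2.eq_swap] at hdef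
      linarith
    have hav : a ≠ v1 := by
      rintro rfl
      rw [hG a, hH a] at hdef
      simp at hdef
    have hwv : w ≠ v1 := by
      rintro rfl
      rw [show s(a,w) = s(w,a) from Sym2.eq_swap] at hsur
      linarith
    have haw : a ≠ w := by
      rintro rfl
      rw [hG a, hH a] at hsur
      simp at hsur
    have hni : NotIncident u1 v1 a w := ⟨Ne.symm hau, Ne.symm hwu, Ne.symm hav, Ne.symm hwv⟩
    have hlt := swap_lt G H u1 v1 a w hne haw hni heZ hsur (Or.inl hdef)
    have hge := hcon a w hni (by omega)
    omega
  have factB : ∀ b w, (G s(u1,b):ℤ) < H s(u1,b) → w ≠ v1 →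
      (G s(b,w):ℤ) ≤ H s(b,w) := by
    intro b w hdef hwv
    by_contra hsur
    push_neg at hsur
    have hbv : b ≠ v1 := by
      rintro rfl
      linarith
    have hbu : b ≠ u1 := by
      rintro rfl
      rw [hG b, hH b] at hdef
      simp at hdef
    have hwu : w ≠ u1 := by
      rintro rfl
      rw [show s(b,w) = s(w,b) from Sym2.eq_swap] at hsur
      linarith
    have hbw : b ≠ w := by
      rintro rfl
      rw [hG b, hH b] at hsur
      simp at hsur
    have hni : NotIncident u1 v1 w b := ⟨Ne.symm hwu, Ne.symm hbu, Ne.symm hwv, Ne.symm hbv⟩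
    have hsur' : (H s(w,b):ℤ) < G s(w,b) := by
      rw [show s(w,b) = s(b,w) from Sym2.eq_swap]; exact hsur
    have hdef' : (G s(b,u1):ℤ) < H s(b,u1) := by
      rw [show s(b,u1) = s(u1,b) from Sym2.eq_swap]; exact hdef
    have hlt := swap_lt G H u1 v1 w b hne (Ne.symm hbw) hni heZ hsur' (Or.inr hdef')
    have hge := hcon w b hni (by omega)
    omega
  have hAapp := half G H hG hH hsum0 u1 v1 hne heZ factA
  have heZ' : (H s(v1,u1) : ℤ) < G s(v1,u1) := by
    rw [show s(v1,u1) = s(u1,v1) from Sym2.eq_swap]; exact heZ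
  have hBapp := half G H hG hH hsum0 v1 u1 (Ne.symm hne) heZ' factB
  linarith
end

section
/- Let G and H be loop-free multigraphs on the same vertex set with identical vertex degrees. Then G can be transformed into H by a finite sequence of double edge swaps, each performed on two non-incident edges of the current graph, in such a way that in every swap at least one of the two swapped edges has strictly larger multiplicity in the current graph than in H. -/
open Finset

variable {V : Type*}

/-- A double edge swap on two non-incident edges of the current graph `G`, where the
first swapped edge has strictly larger multiplicity in `G` than in the target `H`. -/
def TargetStep [DecidableEq V] (H G G' : Multigraph V) : Prop :=
  ∃ v1 v2 v3 v4 : V, NotIncident v1 v2 v3 v4 ∧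
    H s(v1, v2) < G s(v1, v2) ∧ 1 ≤ G s(v3, v4) ∧
    G' = swapped G v1 v2 v3 v4

lemma exists_lt' [Fintype V] {G H : Multigraph V} {a b : V}
    (hdeg : mdeg G a = mdeg H a) (hb : H s(a,b) < G s(a,b)) :
    ∃ c, G s(a,c) < H s(a,c) := by
  by_contra hcon
  push_neg at hcon
  have hsum : ∑ u : V, H s(a,u) < ∑ u : V, G s(a,u) :=
    Finset.sum_lt_sum (fun i _ => hcon i) ⟨b, Finset.mem_univ b, hb⟩
  have hloop := hcon a
  unfold mdeg at hdeg
  omega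

lemma edges_distinct' {v1 v2 v3 v4 : V} (hni : NotIncident v1 v2 v3 v4)
    (h12 : v1 ≠ v2) (h34 : v3 ≠ v4) :
    s(v1,v2) ≠ s(v3,v4) ∧ s(v1,v2) ≠ s(v2,v3) ∧ s(v1,v2) ≠ s(v4,v1) ∧
    s(v3,v4) ≠ s(v2,v3) ∧ s(v3,v4) ≠ s(v4,v1) ∧ s(v2,v3) ≠ s(v4,v1) := by
  obtain ⟨h13, h14, h23, h24⟩ := hni
  have h32 := h23.symm
  have h42 := h24.symm
  have h21 := h12.symm
  have h31 := h13.symm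
  have h41 := h14.symm
  have h43 := h34.symm
  refine ⟨?_, ?_, ?_, ?_, ?_, ?_⟩ <;> · simp only [ne_eq, Sym2.eq_iff]; tauto

lemma count_sum' [Fintype V] [DecidableEq V] (v x y : V) (hxy : x ≠ y) :
    ∑ u : V, (if s(v,u) = s(x,y) then (1:ℕ) else 0)
      = (if v = x then 1 else 0) + (if v = y then 1 else 0) := by
  rcases eq_or_ne v x with rfl | hvx
  · have hvy : v ≠ y := hxy
    rw [if_pos rfl, if_neg hvy]
    have h : ∀ u : V, (s(v,u) = s(v,y)) ↔ u = y := by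
      intro u
      rw [Sym2.eq_iff]
      constructor
      · rintro (⟨-, h⟩ | ⟨h1, -⟩)
        · exact h
        · exact absurd h1 hvy
      · rintro rfl; exact Or.inl ⟨rfl, rfl⟩
    simp only [h]
    simp
  · rcases eq_or_ne v y with rfl | hvy
    · rw [if_neg hvx, if_pos rfl]
      have h : ∀ u : V, (s(v,u) = s(x,v)) ↔ u = x := by
        intro u
        rw [Sym2.eq_iff]
        constructor
        · rintro (⟨h1, -⟩ | ⟨-, h⟩)
          · exact absurd h1 hvx
          · exact h
        · rintro rfl; exact Or.inr ⟨rfl, rfl⟩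
      simp only [h]
      simp
    · have h : ∀ u : V, ¬(s(v,u) = s(x,y)) := by
        intro u h
        rcases Sym2.eq_iff.mp h with ⟨h1,-⟩|⟨h1,-⟩
        exacts [hvx h1, hvy h1]
      simp [h, hvx, hvy]

lemma loop_ne_sym2' {x y : V} (v : V) (h : x ≠ y) : s(v,v) ≠ s(x,y) := by
  rw [ne_eq, Sym2.eq_iff]
  rintro (⟨rfl, rfl⟩ | ⟨rfl, rfl⟩) <;> exact h rfl

lemma mdeg_swap' [Fintype V] [DecidableEq V] {G : Multigraph V} {v1 v2 v3 v4 : V}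
    (hni : NotIncident v1 v2 v3 v4) (h12 : v1 ≠ v2) (h34 : v3 ≠ v4)
    (hg1 : 1 ≤ G s(v1,v2)) (hg2 : 1 ≤ G s(v3,v4)) (v : V) :
    mdeg (swapped G v1 v2 v3 v4) v = mdeg G v := by
  obtain ⟨E12, E13, E14, E23, E24, E34⟩ := edges_distinct' hni h12 h34
  have h23 : v2 ≠ v3 := hni.2.2.1
  have h41 : v4 ≠ v1 := fun h => hni.2.1 h.symm
  have hpt : ∀ e, swapped G v1 v2 v3 v4 e
      + ((if e = s(v1,v2) then 1 else 0) + (if e = s(v3,v4) then 1 else 0))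
      = G e + ((if e = s(v2,v3) then 1 else 0) + (if e = s(v4,v1) then 1 else 0)) := by
    intro e
    rcases eq_or_ne e (s(v1,v2)) with rfl | hne1
    · simp only [swapped, if_pos rfl, if_neg E12, if_neg E13, if_neg E14, if_true]
      omega
    · rcases eq_or_ne e (s(v3,v4)) with rfl | hne2
      · simp only [swapped, if_pos rfl, if_neg E12.symm, if_neg E23, if_neg E24, if_true]
        omega
      · rcases eq_or_ne e (s(v2,v3)) with rfl | hne3
        · simp only [swapped, if_pos rfl, if_neg E13.symm, if_neg E23.symm, if_neg E34, if_true]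
          omega
        · rcases eq_or_ne e (s(v4,v1)) with rfl | hne4
          · simp only [swapped, if_pos rfl, if_neg E14.symm, if_neg E24.symm, if_neg E34.symm,
              if_true]
            omega
          · simp only [swapped, if_neg hne1, if_neg hne2, if_neg hne3, if_neg hne4]
            omega
  have hs : (∑ u : V, swapped G v1 v2 v3 v4 s(v,u))
      + ((∑ u : V, (if s(v,u) = s(v1,v2) then 1 else 0))
        + (∑ u : V, (if s(v,u) = s(v3,v4) then 1 else 0)))
      = (∑ u : V, G s(v,u))
      + ((∑ u : V, (if s(v,u) = s(v2,v3) then 1 else 0))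
        + (∑ u : V, (if s(v,u) = s(v4,v1) then 1 else 0))) := by
    have hs0 : (∑ u : V, (swapped G v1 v2 v3 v4 s(v,u)
        + ((if s(v,u) = s(v1,v2) then 1 else 0) + (if s(v,u) = s(v3,v4) then 1 else 0))))
        = ∑ u : V, (G s(v,u)
        + ((if s(v,u) = s(v2,v3) then 1 else 0) + (if s(v,u) = s(v4,v1) then 1 else 0))) :=
      Finset.sum_congr rfl fun u _ => hpt s(v,u)
    simpa only [Finset.sum_add_distrib] using hs0
  rw [count_sum' v v1 v2 h12, count_sum' v v3 v4 h34, count_sum' v v2 v3 h23,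
    count_sum' v v4 v1 h41] at hs
  have hl := hpt s(v,v)
  rw [if_neg (loop_ne_sym2' v h12), if_neg (loop_ne_sym2' v h34),
    if_neg (loop_ne_sym2' v h23), if_neg (loop_ne_sym2' v h41)] at hl
  unfold mdeg
  omega

def Ddist [Fintype V] [DecidableEq V] (G H : Multigraph V) : ℕ :=
  ∑ e : Sym2 V, ((G e - H e) + (H e - G e))

lemma dist_swap' [Fintype V] [DecidableEq V] {G H : Multigraph V} {v1 v2 v3 v4 : V}
    (hni : NotIncident v1 v2 v3 v4) (h12 : v1 ≠ v2) (h34 : v3 ≠ v4)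
    (h1 : H s(v1,v2) < G s(v1,v2)) (h2 : H s(v3,v4) < G s(v3,v4))
    (h34d : G s(v2,v3) < H s(v2,v3) ∨ G s(v4,v1) < H s(v4,v1)) :
    Ddist (swapped G v1 v2 v3 v4) H < Ddist G H := by
  obtain ⟨E12, E13, E14, E23, E24, E34⟩ := edges_distinct' hni h12 h34
  have hv1 : swapped G v1 v2 v3 v4 s(v1,v2) = G s(v1,v2) - 1 := by
    simp only [swapped, if_pos rfl, if_neg E12, if_neg E13, if_neg E14, if_true]
    omega
  have hv2 : swapped G v1 v2 v3 v4 s(v3,v4) = G s(v3,v4) - 1 := by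
    simp only [swapped, if_pos rfl, if_neg E12.symm, if_neg E23, if_neg E24, if_true]
    omega
  have hv3 : swapped G v1 v2 v3 v4 s(v2,v3) = G s(v2,v3) + 1 := by
    simp only [swapped, if_pos rfl, if_neg E13.symm, if_neg E23.symm, if_neg E34, if_true]
    omega
  have hv4 : swapped G v1 v2 v3 v4 s(v4,v1) = G s(v4,v1) + 1 := by
    simp only [swapped, if_pos rfl, if_neg E14.symm, if_neg E24.symm, if_neg E34.symm, if_true]
    omega
  have hout : ∀ e : Sym2 V, e ≠ s(v1,v2) → e ≠ s(v3,v4) → e ≠ s(v2,v3) → e ≠ s(v4,v1) →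
      swapped G v1 v2 v3 v4 e = G e := by
    intro e hne1 hne2 hne3 hne4
    simp only [swapped, if_neg hne1, if_neg hne2, if_neg hne3, if_neg hne4]
    omega
  set s4 : Finset (Sym2 V) := insert s(v1,v2) (insert s(v3,v4) (insert s(v2,v3) {s(v4,v1)}))
    with hs4
  have hmem : ∀ e : Sym2 V, e ∈ s4 ↔
      e = s(v1,v2) ∨ e = s(v3,v4) ∨ e = s(v2,v3) ∨ e = s(v4,v1) := by
    intro e
    simp [hs4]
  have hsplit : ∀ K : Multigraph V, Ddist K H
      = (∑ e ∈ Finset.univ \ s4, ((K e - H e) + (H e - K e)))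
        + ∑ e ∈ s4, ((K e - H e) + (H e - K e)) := by
    intro K
    rw [Ddist, ← Finset.sum_sdiff (Finset.subset_univ s4)]
  have houtsum : ∑ e ∈ Finset.univ \ s4, ((swapped G v1 v2 v3 v4 e - H e)
      + (H e - swapped G v1 v2 v3 v4 e))
      = ∑ e ∈ Finset.univ \ s4, ((G e - H e) + (H e - G e)) := by
    refine Finset.sum_congr rfl fun e he => ?_
    rw [Finset.mem_sdiff, hmem] at he
    push_neg at he
    obtain ⟨-, hne1, hne2, hne3, hne4⟩ := he
    rw [hout e hne1 hne2 hne3 hne4]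
  have hnotin1 : s(v1,v2) ∉ insert s(v3,v4) (insert s(v2,v3) ({s(v4,v1)} : Finset (Sym2 V))) := by
    simp [E12, E13, E14]
  have hnotin2 : s(v3,v4) ∉ insert s(v2,v3) ({s(v4,v1)} : Finset (Sym2 V)) := by
    simp [E23, E24]
  have hnotin3 : s(v2,v3) ∉ ({s(v4,v1)} : Finset (Sym2 V)) := by
    simp [E34]
  have hinsum : ∀ K : Multigraph V, ∑ e ∈ s4, ((K e - H e) + (H e - K e))
      = ((K s(v1,v2) - H s(v1,v2)) + (H s(v1,v2) - K s(v1,v2)))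
      + (((K s(v3,v4) - H s(v3,v4)) + (H s(v3,v4) - K s(v3,v4)))
      + (((K s(v2,v3) - H s(v2,v3)) + (H s(v2,v3) - K s(v2,v3)))
      + ((K s(v4,v1) - H s(v4,v1)) + (H s(v4,v1) - K s(v4,v1))))) := by
    intro K
    rw [hs4, Finset.sum_insert hnotin1, Finset.sum_insert hnotin2, Finset.sum_insert hnotin3,
      Finset.sum_singleton]
  rw [hsplit G, hsplit (swapped G v1 v2 v3 v4), houtsum, hinsum, hinsum, hv1, hv2, hv3, hv4]
  have hG1 : 1 ≤ G s(v1,v2) := by omega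
  have hG2 : 1 ≤ G s(v3,v4) := by omega
  omega

lemma exists_quad' [Fintype V] {G H : Multigraph V} (hne : G ≠ H)
    (hG : LoopFree G) (hH : LoopFree H) (hdeg : ∀ x, mdeg G x = mdeg H x) :
    ∃ v1 v2 v3 v4 : V, NotIncident v1 v2 v3 v4 ∧
      H s(v1,v2) < G s(v1,v2) ∧ H s(v3,v4) < G s(v3,v4) ∧
      (G s(v2,v3) < H s(v2,v3) ∨ G s(v4,v1) < H s(v4,v1)) := by
  obtain ⟨a, d, had⟩ : ∃ a d, G s(a,d) < H s(a,d) := by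
    have hex : ∃ p q, G s(p,q) ≠ H s(p,q) := by
      by_contra hcon
      push_neg at hcon
      apply hne
      funext e
      induction e using Sym2.ind with
      | _ p q => exact hcon p q
    obtain ⟨p, q, hpq⟩ := hex
    rcases lt_or_gt_of_ne hpq with hlt | hgt
    · exact ⟨p, q, hlt⟩
    · obtain ⟨c, hc⟩ := exists_lt' (hdeg p) hgt
      exact ⟨p, c, hc⟩
  obtain ⟨b, hb⟩ := exists_lt' (G := H) (H := G) (hdeg a).symm had
  have had' : G s(d,a) < H s(d,a) := by rwa [Sym2.eq_swap]
  obtain ⟨c, hc⟩ := exists_lt' (G := H) (H := G) (hdeg d).symm had'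
  have hab : a ≠ b := by rintro rfl; have := hG a; omega
  have hadne : a ≠ d := by rintro rfl; have := hH a; omega
  have hbd : b ≠ d := by rintro rfl; omega
  have hdc : d ≠ c := by rintro rfl; have := hG d; omega
  have hca : c ≠ a := by rintro rfl; omega
  by_cases hcb : c = b
  · subst hcb
    by_cases hx : ∃ x, x ≠ c ∧ H s(a,x) < G s(a,x)
    · obtain ⟨x, hxb, hax⟩ := hx
      have hxd : x ≠ d := by rintro rfl; omega
      refine ⟨d, c, x, a, ⟨fun h => hxd h.symm, hadne.symm, fun h => hxb h.symm, hca⟩,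
        hc, ?_, Or.inr ?_⟩
      · rwa [Sym2.eq_swap]
      · exact had
    · push_neg at hx
      have hba : H s(c,a) < G s(c,a) := by rwa [Sym2.eq_swap]
      obtain ⟨e, he⟩ := exists_lt' (hdeg c) hba
      have heb : e ≠ c := by intro h; rw [h] at he; have := hH c; omega
      have hea : e ≠ a := by rintro rfl; omega
      have heb' : G s(e,c) < H s(e,c) := by rwa [Sym2.eq_swap]
      obtain ⟨f, hf⟩ := exists_lt' (G := H) (H := G) (hdeg e).symm heb'
      have hfb : f ≠ c := by rintro rfl; omega
      have hfa : f ≠ a := by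
        intro h
        rw [h] at hf
        rw [Sym2.eq_swap] at hf
        have h2 := hx e heb
        omega
      exact ⟨a, c, e, f, ⟨hea.symm, fun h => hfa h.symm, heb.symm, hfb.symm⟩, hb, hf, Or.inl he⟩
  · refine ⟨a, b, c, d, ⟨fun h => hca h.symm, hadne, fun h => hcb h.symm, hbd⟩,
      hb, ?_, Or.inr had'⟩
    rwa [Sym2.eq_swap]

/-- Loop-free multigraphs with identical degrees can be transformed into
one another by double edge swaps on non-incident edges, each swap involving an edge
whose current multiplicity exceeds its multiplicity in the target. -/
theorem reaches_target_by_excess_swaps [Fintype V] [DecidableEq V]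
    (G H : Multigraph V) (hG : LoopFree G) (hH : LoopFree H)
    (hdeg : ∀ x : V, mdeg G x = mdeg H x) :
    Relation.ReflTransGen (TargetStep H) G H := by
  suffices h : ∀ (n : ℕ) (G : Multigraph V), Ddist G H ≤ n → LoopFree G →
      (∀ x, mdeg G x = mdeg H x) → Relation.ReflTransGen (TargetStep H) G H from
    h (Ddist G H) G le_rfl hG hdeg
  intro n
  induction n with
  | zero =>
    intro G hD hGl hGd
    have hGH : G = H := by
      funext e
      have h0 : Ddist G H = 0 := Nat.le_zero.mp hD
      have he := (Finset.sum_eq_zero_iff.mp h0) e (Finset.mem_univ e)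
      omega
    exact hGH ▸ Relation.ReflTransGen.refl
  | succ n ih =>
    intro G hD hGl hGd
    by_cases hGH : G = H
    · exact hGH ▸ Relation.ReflTransGen.refl
    obtain ⟨v1, v2, v3, v4, hni, h1, h2, h34d⟩ := exists_quad' hGH hGl hH hGd
    have h12 : v1 ≠ v2 := by rintro rfl; have := hGl v1; omega
    have h34 : v3 ≠ v4 := by rintro rfl; have := hGl v3; omega
    have hstep : TargetStep H G (swapped G v1 v2 v3 v4) :=
      ⟨v1, v2, v3, v4, hni, h1, by omega, rfl⟩
    refine Relation.ReflTransGen.head hstep (ih _ ?_ ?_ ?_)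
    · have := dist_swap' hni h12 h34 h1 h2 h34d
      omega
    · intro v
      obtain ⟨E12, E13, E14, E23, E24, E34⟩ := edges_distinct' hni h12 h34
      have h23 : v2 ≠ v3 := hni.2.2.1
      have h41 : v4 ≠ v1 := fun h => hni.2.1 h.symm
      simp only [swapped, if_neg (loop_ne_sym2' v h12), if_neg (loop_ne_sym2' v h34),
        if_neg (loop_ne_sym2' v h23), if_neg (loop_ne_sym2' v h41)]
      have := hGl v
      omega
    · intro x
      rw [mdeg_swap' hni h12 h34 (by omega) (by omega) x]
      exact hGd x
end

section
/- A sequence of nonnegative integers d1 ≥ d2 ≥ ... ≥ dn that is the degree sequence of a simple graph satisfies, for every 1 ≤ k ≤ n, the inequality d1 + ... + dk ≤ k(k−1) + Σ_{i=k+1}^{n} min(di, k). -/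
open Finset

variable {V : Type*}

/-- (Erdős–Gallai, "only if" direction.) A weakly decreasing sequence
`d` of nonnegative integers that is the degree sequence of a simple graph satisfies
`d₁ + ⋯ + d_k ≤ k(k−1) + Σ_{i>k} min(d_i, k)` for every `1 ≤ k ≤ n`. -/
theorem erdos_gallai_necessary (n : ℕ) (d : Fin n → ℕ) (hanti : Antitone d)
    (hreal : ∃ G : Multigraph (Fin n), IsSimpleMG G ∧ ∀ i : Fin n, mdeg G i = d i)
    (k : ℕ) (hk1 : 1 ≤ k) (hkn : k ≤ n) :
    ∑ i ∈ univ.filter (fun i : Fin n => (i : ℕ) < k), d i ≤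
      k * (k - 1) + ∑ i ∈ univ.filter (fun i : Fin n => k ≤ (i : ℕ)), min (d i) k := by
  obtain ⟨G, ⟨hloop, hmul⟩, hdeg⟩ := hreal
  set A := univ.filter (fun i : Fin n => (i : ℕ) < k) with hA
  set B := univ.filter (fun i : Fin n => k ≤ (i : ℕ)) with hB
  have hd : ∀ v : Fin n, d v = ∑ u : Fin n, G s(v, u) := by
    intro v
    rw [← hdeg v, mdeg, hloop v, Nat.add_zero]
  have hcardA : A.card = k := by
    apply Finset.card_eq_of_bijective (fun i hi => ⟨i, lt_of_lt_of_le hi hkn⟩)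
    · intro a ha
      have : (a : ℕ) < k := by simpa [hA] using ha
      exact ⟨a, this, by simp⟩
    · intro i hi
      simp [hA, hi]
    · intro i j hi hj hij
      simpa using congrArg Fin.val hij
  have hsplit : ∀ v : Fin n, d v = (∑ u ∈ A, G s(v, u)) + ∑ u ∈ B, G s(v, u) := by
    intro v
    rw [hd v]
    have : B = univ.filter (fun i : Fin n => ¬ ((i : ℕ) < k)) := by
      simp [hB, not_lt]
    rw [this, ← Finset.sum_filter_add_sum_filter_not univ (fun i : Fin n => (i : ℕ) < k)]
  have hinner : ∀ v ∈ A, (∑ u ∈ A, G s(v, u)) ≤ k - 1 := by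
    intro v hv
    calc ∑ u ∈ A, G s(v, u) ≤ ∑ u ∈ A, (if u = v then 0 else 1) := by
          apply Finset.sum_le_sum
          intro u hu
          by_cases h : u = v
          · simp [h, hloop v]
          · simp [h]
            exact hmul _
      _ = ∑ u ∈ A.erase v, 1 := by
          rw [← Finset.add_sum_erase A _ hv, if_pos rfl, zero_add]
          exact Finset.sum_congr rfl fun u hu => if_neg (Finset.ne_of_mem_erase hu)
      _ = A.card - 1 := by rw [Finset.sum_const, Finset.card_erase_of_mem hv]; simp
      _ = k - 1 := by rw [hcardA]
  have houter : ∀ u ∈ B, (∑ v ∈ A, G s(v, u)) ≤ min (d u) k := by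
    intro u hu
    apply le_min
    · calc ∑ v ∈ A, G s(v, u) = ∑ v ∈ A, G s(u, v) := by
            apply Finset.sum_congr rfl; intro v _; rw [Sym2.eq_swap]
        _ ≤ ∑ v : Fin n, G s(u, v) := Finset.sum_le_sum_of_subset (Finset.subset_univ A)
        _ = d u := (hd u).symm
    · calc ∑ v ∈ A, G s(v, u) ≤ ∑ v ∈ A, 1 := Finset.sum_le_sum (fun v _ => hmul _)
        _ = k := by rw [Finset.sum_const, hcardA]; simp
  calc ∑ i ∈ A, d i = (∑ v ∈ A, ∑ u ∈ A, G s(v, u)) + ∑ v ∈ A, ∑ u ∈ B, G s(v, u) := by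
        rw [← Finset.sum_add_distrib]
        exact Finset.sum_congr rfl (fun v _ => hsplit v)
    _ ≤ (∑ v ∈ A, (k - 1)) + ∑ u ∈ B, ∑ v ∈ A, G s(v, u) :=
        Nat.add_le_add (Finset.sum_le_sum hinner) (le_of_eq Finset.sum_comm)
    _ ≤ k * (k - 1) + ∑ i ∈ B, min (d i) k := by
        apply Nat.add_le_add
        · rw [Finset.sum_const, hcardA, smul_eq_mul]
        · exact Finset.sum_le_sum houter
end

section
/- Let G be a loop-free multigraph, m ≥ 2 an integer, and v1,...,v_{2m} vertices such that: (a) v1 is distinct from v2,...,v_{2m}; (b) vi ≠ v_{i+1} for 1 ≤ i ≤ 2m−1 and the unordered pairs {vi,v_{i+1}} (1 ≤ i ≤ 2m−1) are pairwise distinct and distinct from {v1,v_{2m}}; (c) G contains an edge of type {v_{2j},v_{2j+1}} for each 1 ≤ j ≤ m−1; (d) the edge {v1,v_{2m}} has multiplicity at least 2 in G. Then there is a finite sequence of admissible double edge swaps reducing the multiplicity of {v1,v_{2m}} by one without creating any new non-simple edge except possibly among the pairs {v_{2j−1},v_{2j}}, 1 ≤ j ≤ m, that were already edges of G. -/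
open Finset

variable {V : Type*}

lemma sym2_ne {a b c d : V} (h1 : a ≠ c ∨ b ≠ d) (h2 : a ≠ d ∨ b ≠ c) :
    s(a, b) ≠ s(c, d) := by
  intro h; rw [Sym2.eq_iff] at h; tauto

lemma sym2_diag_ne {w x y : V} (h : x ≠ y) : s(w, w) ≠ s(x, y) := by
  intro hh
  rw [Sym2.eq_iff] at hh
  rcases hh with ⟨h1, h2⟩ | ⟨h1, h2⟩
  · exact h (h1.symm.trans h2)
  · exact h (h2.symm.trans h1)

theorem swap_aux [Fintype V] [DecidableEq V] :
    ∀ m : ℕ, 2 ≤ m → ∀ G : Multigraph V, LoopFree G → ∀ v : ℕ → V,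
    (∀ i : ℕ, 2 ≤ i → i ≤ 2 * m → v 1 ≠ v i) →
    (∀ i : ℕ, 1 ≤ i → i ≤ 2 * m - 1 → v i ≠ v (i + 1)) →
    (∀ i j : ℕ, 1 ≤ i → i < j → j ≤ 2 * m - 1 →
      s(v i, v (i + 1)) ≠ s(v j, v (j + 1))) →
    (∀ i : ℕ, 1 ≤ i → i ≤ 2 * m - 1 → s(v i, v (i + 1)) ≠ s(v 1, v (2 * m))) →
    (∀ j : ℕ, 1 ≤ j → j ≤ m - 1 → 1 ≤ G s(v (2 * j), v (2 * j + 1))) →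
    2 ≤ G s(v 1, v (2 * m)) →
    ∃ G' : Multigraph V, Relation.ReflTransGen AdmissibleStep G G' ∧
      G' s(v 1, v (2 * m)) = G s(v 1, v (2 * m)) - 1 ∧
      (∀ p : Sym2 V, 2 ≤ G' p → 2 ≤ G p ∨
        ∃ j : ℕ, 1 ≤ j ∧ j ≤ m ∧ p = s(v (2 * j - 1), v (2 * j)) ∧ 1 ≤ G p) ∧
      (∀ w : V, s(v 1, w) ≠ s(v 1, v (2 * m)) →
        (∀ j : ℕ, 1 ≤ j → j ≤ m → s(v 1, w) ≠ s(v (2 * j - 1), v (2 * j))) →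
        1 ≤ G s(v 1, w) → G' s(v 1, w) = G s(v 1, w)) := by
  intro m
  induction m using Nat.strong_induction_on with
  | _ m IH =>
  intro hm G hlf v ha hb1 hb2 hb3 hc hd
  have A12 : v 1 ≠ v (2*m-2) := ha _ (by omega) (by omega)
  have A13 : v 1 ≠ v (2*m-1) := ha _ (by omega) (by omega)
  have A14 : v 1 ≠ v (2*m) := ha _ (by omega) (by omega)
  have A23 : v (2*m-2) ≠ v (2*m-1) := by
    have h := hb1 (2*m-2) (by omega) (by omega)
    rwa [show 2*m-2+1 = 2*m-1 by omega] at h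
  have A34 : v (2*m-1) ≠ v (2*m) := by
    have h := hb1 (2*m-1) (by omega) (by omega)
    rwa [show 2*m-1+1 = 2*m by omega] at h
  have A24 : v (2*m-2) ≠ v (2*m) := by
    intro h
    have h2 := hb2 (2*m-2) (2*m-1) (by omega) (by omega) (by omega)
    rw [show 2*m-2+1 = 2*m-1 by omega, show 2*m-1+1 = 2*m by omega, h] at h2
    exact h2 Sym2.eq_swap
  set G₁ := swapped G (v 1) (v (2*m)) (v (2*m-1)) (v (2*m-2)) with hG1def
  have hval : ∀ p : Sym2 V, G₁ p = G p - (if p = s(v 1, v (2*m)) then 1 else 0)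
      - (if p = s(v (2*m-1), v (2*m-2)) then 1 else 0)
      + (if p = s(v (2*m), v (2*m-1)) then 1 else 0)
      + (if p = s(v (2*m-2), v 1) then 1 else 0) := by
    intro p; rw [hG1def]; rfl
  have hv_e1 : G₁ s(v 1, v (2*m)) = G s(v 1, v (2*m)) - 1 := by
    rw [hval, if_pos rfl, if_neg (sym2_ne (Or.inl A13) (Or.inl A12)),
      if_neg (sym2_ne (Or.inl A14) (Or.inl A13)),
      if_neg (sym2_ne (Or.inl A12) (Or.inr (Ne.symm A24)))]
    omega
  have hv_f2 : G₁ s(v 1, v (2*m-2)) = G s(v 1, v (2*m-2)) + 1 := by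
    rw [hval, if_neg (sym2_ne (Or.inr A24) (Or.inl A14)),
      if_neg (sym2_ne (Or.inl A13) (Or.inl A12)),
      if_neg (sym2_ne (Or.inl A14) (Or.inl A13)),
      if_pos Sym2.eq_swap]
    omega
  have hv_f1 : G₁ s(v (2*m-1), v (2*m)) = G s(v (2*m-1), v (2*m)) + 1 := by
    rw [hval, if_neg (sym2_ne (Or.inl (Ne.symm A13)) (Or.inl A34)),
      if_neg (sym2_ne (Or.inr (Ne.symm A24)) (Or.inl (Ne.symm A23))),
      if_pos Sym2.eq_swap,
      if_neg (sym2_ne (Or.inl (Ne.symm A23)) (Or.inl (Ne.symm A13)))]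
    omega
  have hle : ∀ p : Sym2 V, p ≠ s(v (2*m), v (2*m-1)) → p ≠ s(v (2*m-2), v 1) →
      G₁ p ≤ G p := by
    intro p h1 h2
    rw [hval, if_neg h1, if_neg h2]
    split_ifs <;> omega
  have hge : ∀ p : Sym2 V, p ≠ s(v 1, v (2*m)) → p ≠ s(v (2*m-1), v (2*m-2)) →
      G p ≤ G₁ p := by
    intro p h1 h2
    rw [hval, if_neg h1, if_neg h2]
    split_ifs <;> omega
  have hframe : ∀ p : Sym2 V, p ≠ s(v 1, v (2*m)) → p ≠ s(v (2*m-1), v (2*m-2)) →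
      p ≠ s(v (2*m), v (2*m-1)) → p ≠ s(v (2*m-2), v 1) → G₁ p = G p := by
    intro p h1 h2 h3 h4
    rw [hval, if_neg h1, if_neg h2, if_neg h3, if_neg h4]
    omega
  have hcm : 1 ≤ G s(v (2*m-1), v (2*m-2)) := by
    have h := hc (m-1) (by omega) le_rfl
    rw [show 2*(m-1)+1 = 2*m-1 by omega, show 2*(m-1) = 2*m-2 by omega] at h
    rw [show s(v (2*m-1), v (2*m-2)) = s(v (2*m-2), v (2*m-1)) from Sym2.eq_swap]
    exact h
  have hstep : AdmissibleStep G G₁ :=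
    ⟨v 1, v (2*m), v (2*m-1), v (2*m-2), ⟨A13, A12, Ne.symm A34, Ne.symm A24⟩,
      by omega, hcm, Or.inr (Or.inr (Or.inl hd)), hG1def⟩
  by_cases hcase : 1 ≤ G s(v 1, v (2*m-2)) ∧
      ∀ j : ℕ, 1 ≤ j → j ≤ m → s(v 1, v (2*m-2)) ≠ s(v (2*j-1), v (2*j))
  · -- recurse
    obtain ⟨hf2pos, hf2na⟩ := hcase
    have hm3 : 3 ≤ m := by
      by_contra hlt
      have hm2 : m = 2 := by omega
      subst hm2
      exact hf2na 1 le_rfl (by omega) (by norm_num)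
    have hlf1 : LoopFree G₁ := by
      intro w
      have h1 := hle s(w, w) (sym2_diag_ne (Ne.symm A34)) (sym2_diag_ne (Ne.symm A12))
      have h2 := hlf w
      omega
    have hb3' : ∀ i : ℕ, 1 ≤ i → i ≤ 2*(m-1) - 1 →
        s(v i, v (i+1)) ≠ s(v 1, v (2*(m-1))) := by
      intro i h1 h2 heq
      rw [show 2*(m-1) = 2*m-2 by omega] at heq
      rw [Sym2.eq_iff] at heq
      rcases heq with ⟨hx, hy⟩ | ⟨hx, hy⟩
      · have hi1 : i = 1 := by
          by_contra hne
          exact ha i (by omega) (by omega) hx.symm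
        subst hi1
        norm_num at hy
        refine hf2na 1 le_rfl (by omega) ?_
        rw [Sym2.eq_iff]
        norm_num
        exact Or.inl hy.symm
      · exact ha (i+1) (by omega) (by omega) hy.symm
    have hc' : ∀ j : ℕ, 1 ≤ j → j ≤ (m-1) - 1 → 1 ≤ G₁ s(v (2*j), v (2*j+1)) := by
      intro j h1 h2
      have hg := hc j h1 (by omega)
      have hne1 : s(v (2*j), v (2*j+1)) ≠ s(v 1, v (2*m)) :=
        hb3 (2*j) (by omega) (by omega)
      have hne2 : s(v (2*j), v (2*j+1)) ≠ s(v (2*m-1), v (2*m-2)) := by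
        have h := hb2 (2*j) (2*m-2) (by omega) (by omega) (by omega)
        rw [show 2*m-2+1 = 2*m-1 by omega] at h
        exact fun he => h (he.trans Sym2.eq_swap)
      exact le_trans hg (hge _ hne1 hne2)
    have hd' : 2 ≤ G₁ s(v 1, v (2*(m-1))) := by
      rw [show 2*(m-1) = 2*m-2 by omega, hv_f2]
      omega
    obtain ⟨G', hrt, heq, hns, hfr⟩ :=
      IH (m-1) (by omega) (by omega) G₁ hlf1 v
        (fun i h1 h2 => ha i h1 (by omega))
        (fun i h1 h2 => hb1 i h1 (by omega))
        (fun i j h1 h2 h3 => hb2 i j h1 h2 (by omega))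
        hb3' hc' hd'
    rw [show 2*(m-1) = 2*m-2 by omega] at heq hfr
    have heqf2 : G' s(v 1, v (2*m-2)) = G s(v 1, v (2*m-2)) := by
      rw [heq, hv_f2]
      omega
    refine ⟨G', Relation.ReflTransGen.head hstep hrt, ?_, ?_, ?_⟩
    · -- multiplicity at {v1, v 2m}
      have hguard : ∀ j : ℕ, 1 ≤ j → j ≤ m-1 →
          s(v 1, v (2*m)) ≠ s(v (2*j-1), v (2*j)) := by
        intro j hj1 hj2 he
        have h3 := hb3 (2*j-1) (by omega) (by omega)
        rw [show 2*j-1+1 = 2*j by omega] at h3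
        exact h3 he.symm
      have h := hfr (v (2*m)) (sym2_ne (Or.inr (Ne.symm A24)) (Or.inl A12)) hguard
        (by rw [hv_e1]; omega)
      rw [h, hv_e1]
    · -- no new non-simple edges
      intro p hp
      by_cases hpf2 : p = s(v 1, v (2*m-2))
      · left
        rw [hpf2] at hp ⊢
        rw [heqf2] at hp
        exact hp
      by_cases hpf1 : p = s(v (2*m-1), v (2*m))
      · rcases hns p hp with h2 | ⟨j, hj1, hj2, hpe, hg1⟩
        · rw [hpf1] at h2
          rw [hv_f1] at h2
          right
          refine ⟨m, by omega, le_rfl, hpf1, ?_⟩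
          rw [hpf1]; omega
        · exfalso
          have h3 := hb2 (2*j-1) (2*m-1) (by omega) (by omega) (by omega)
          rw [show 2*j-1+1 = 2*j by omega, show 2*m-1+1 = 2*m by omega] at h3
          exact h3 (hpe.symm.trans hpf1)
      · have hle' : G₁ p ≤ G p :=
          hle p (fun he => hpf1 (he.trans Sym2.eq_swap))
            (fun he => hpf2 (he.trans Sym2.eq_swap))
        rcases hns p hp with h2 | ⟨j, hj1, hj2, hpe, hg1⟩
        · left; omega
        · right; exact ⟨j, hj1, by omega, hpe, by omega⟩
    · -- frame invariant
      intro w hne hall h1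
      by_cases hwf2 : s(v 1, w) = s(v 1, v (2*m-2))
      · rw [hwf2]; exact heqf2
      · have hfrm : G₁ s(v 1, w) = G s(v 1, w) :=
          hframe _ hne (sym2_ne (Or.inl A13) (Or.inl A12))
            (sym2_ne (Or.inl A14) (Or.inl A13))
            (fun he => hwf2 (he.trans Sym2.eq_swap))
        have h := hfr w hwf2 (fun j hj1 hj2 => hall j hj1 (by omega))
          (by rw [hfrm]; exact h1)
        rw [h, hfrm]
  · -- stop after one swap
    refine ⟨G₁, Relation.ReflTransGen.single hstep, hv_e1, ?_, ?_⟩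
    · intro p hp
      by_cases hpf2 : p = s(v 1, v (2*m-2))
      · rw [hpf2, hv_f2] at hp
        have h1 : 1 ≤ G s(v 1, v (2*m-2)) := by omega
        have h2 : ∃ j : ℕ, 1 ≤ j ∧ j ≤ m ∧
            s(v 1, v (2*m-2)) = s(v (2*j-1), v (2*j)) := by
          by_contra hno
          push_neg at hno
          exact hcase ⟨h1, hno⟩
        obtain ⟨j, hj1, hj2, hje⟩ := h2
        right
        exact ⟨j, hj1, hj2, hpf2.trans hje, by rw [hpf2]; exact h1⟩
      by_cases hpf1 : p = s(v (2*m-1), v (2*m))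
      · rw [hpf1, hv_f1] at hp
        right
        refine ⟨m, by omega, le_rfl, hpf1, ?_⟩
        rw [hpf1]; omega
      · left
        have hle' : G₁ p ≤ G p :=
          hle p (fun he => hpf1 (he.trans Sym2.eq_swap))
            (fun he => hpf2 (he.trans Sym2.eq_swap))
        omega
    · intro w hne hall h1
      have hwf2 : s(v 1, w) ≠ s(v 1, v (2*m-2)) := by
        intro he
        apply hcase
        constructor
        · rw [← he]; exact h1
        · intro j hj1 hj2
          rw [← he]; exact hall j hj1 hj2
      exact hframe _ hne (sym2_ne (Or.inl A13) (Or.inl A12))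
        (sym2_ne (Or.inl A14) (Or.inl A13))
        (fun he => hwf2 (he.trans Sym2.eq_swap))

/-- swapping lemma: given vertices `v 1, …, v (2m)` in a loop-free
multigraph satisfying (a)–(d), there is a finite sequence of admissible double edge
swaps reducing the multiplicity of `{v 1, v (2m)}` by one without creating any new
non-simple edge except possibly among the pairs `{v (2j−1), v (2j)}`, `1 ≤ j ≤ m`,
that were already edges. -/
theorem swapping_lemma [Fintype V] [DecidableEq V]
    (G : Multigraph V) (hlf : LoopFree G) (m : ℕ) (hm : 2 ≤ m) (v : ℕ → V)
    (ha : ∀ i : ℕ, 2 ≤ i → i ≤ 2 * m → v 1 ≠ v i)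
    (hb1 : ∀ i : ℕ, 1 ≤ i → i ≤ 2 * m - 1 → v i ≠ v (i + 1))
    (hb2 : ∀ i j : ℕ, 1 ≤ i → i < j → j ≤ 2 * m - 1 →
      s(v i, v (i + 1)) ≠ s(v j, v (j + 1)))
    (hb3 : ∀ i : ℕ, 1 ≤ i → i ≤ 2 * m - 1 → s(v i, v (i + 1)) ≠ s(v 1, v (2 * m)))
    (hc : ∀ j : ℕ, 1 ≤ j → j ≤ m - 1 → 1 ≤ G s(v (2 * j), v (2 * j + 1)))
    (hd : 2 ≤ G s(v 1, v (2 * m))) :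
    ∃ G' : Multigraph V, Relation.ReflTransGen AdmissibleStep G G' ∧
      G' s(v 1, v (2 * m)) = G s(v 1, v (2 * m)) - 1 ∧
      ∀ p : Sym2 V, 2 ≤ G' p → 2 ≤ G p ∨
        ∃ j : ℕ, 1 ≤ j ∧ j ≤ m ∧ p = s(v (2 * j - 1), v (2 * j)) ∧ 1 ≤ G p := by
  obtain ⟨G', h1, h2, h3, _⟩ := swap_aux m hm G hlf v ha hb1 hb2 hb3 hc hd
  exact ⟨G', h1, h2, h3⟩
end

section
/- Let G be a non-simple loop-free multigraph on a totally ordered vertex set (where deg(u) < deg(v) implies u < v) that cannot be transformed into a smaller graph by admissible double edge swaps, and let {u1,u2} with u1 > u2 be its maximal non-simple edge. Then there is no edge of G between a vertex v1 not adjacent to u1 (v1 ∉ {u1,u2}) and a vertex v2 ∉ {u1,u2} that is either smaller than u1 or not adjacent to u2. -/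
open Finset

variable {V : Type*}

/-- The larger endpoint of an unordered pair. -/
def pmax [LinearOrder V] (p : Sym2 V) : V :=
  Sym2.lift ⟨fun a b => max a b, fun a b => max_comm a b⟩ p

/-- The smaller endpoint of an unordered pair. -/
def pmin [LinearOrder V] (p : Sym2 V) : V :=
  Sym2.lift ⟨fun a b => min a b, fun a b => min_comm a b⟩ p

/-- Order on unordered pairs: compare larger endpoints, then smaller endpoints. -/
def PairLT [LinearOrder V] (p q : Sym2 V) : Prop :=
  pmax p < pmax q ∨ (pmax p = pmax q ∧ pmin p < pmin q)

def PairLE [LinearOrder V] (p q : Sym2 V) : Prop := p = q ∨ PairLT p q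

/-- The pair `p` carries a non-simple edge of `G`: a multiple edge or a loop. -/
def NonSimpleAt (G : Multigraph V) (p : Sym2 V) : Prop :=
  2 ≤ G p ∨ (p.IsDiag ∧ 1 ≤ G p)

/-- `p` is the maximal non-simple edge of `G`. -/
def MaxNonSimple [LinearOrder V] (G : Multigraph V) (p : Sym2 V) : Prop :=
  NonSimpleAt G p ∧ ∀ q : Sym2 V, NonSimpleAt G q → PairLE q p

/-- The strict partial order on multigraphs with fixed degrees: `G < H` iff `H` is
non-simple and its maximal non-simple edge is larger than all non-simple edges of `G`,
or the maximal non-simple edges agree but have strictly larger multiplicity in `H`. -/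
def GraphLT [LinearOrder V] (G H : Multigraph V) : Prop :=
  ∃ p : Sym2 V, MaxNonSimple H p ∧
    ((∀ q : Sym2 V, NonSimpleAt G q → PairLT q p) ∨ (MaxNonSimple G p ∧ G p < H p))

/-- Lemma 1: in a minimal non-simple loop-free multigraph with maximal
non-simple edge {u1,u2}, u1 > u2, there is no edge between an ordinary vertex not
adjacent to u1 and an ordinary vertex that is small or not adjacent to u2. -/
theorem no_edge_from_nonneighbour_of_u1 [Fintype V] [LinearOrder V]
    (G : Multigraph V) (hlf : LoopFree G)
    (hord : ∀ u v : V, mdeg G u < mdeg G v → u < v)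
    (hmin : ∀ G' : Multigraph V, Relation.ReflTransGen AdmissibleStep G G' → ¬ GraphLT G' G)
    (u1 u2 : V) (hmax : MaxNonSimple G s(u1, u2)) (hu : u2 < u1)
    (v1 v2 : V) (hv1a : v1 ≠ u1) (hv1b : v1 ≠ u2) (hv2a : v2 ≠ u1) (hv2b : v2 ≠ u2)
    (h1 : G s(v1, u1) = 0) (h2 : v2 < u1 ∨ G s(v2, u2) = 0) :
    G s(v1, v2) = 0 := by
  by_contra hne
  have hvv : 1 ≤ G s(v2, v1) := by
    rw [Sym2.eq_swap]; exact Nat.one_le_iff_ne_zero.mpr hne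
  have hv12 : v1 ≠ v2 := by rintro rfl; exact hne (hlf v1)
  have hpd : ¬ (s(u1, u2) : Sym2 V).IsDiag := by
    rw [Sym2.mk_isDiag_iff]; exact hu.ne'
  have hGp : 2 ≤ G s(u1, u2) := hmax.1.resolve_right (fun h => hpd h.1)
  set G' := swapped G u1 u2 v2 v1 with hG'
  -- pair disequalities
  have d1 : s(u1, u2) ≠ s(v2, v1) := by
    intro heq; rcases Sym2.eq_iff.mp heq with (⟨h, _⟩ | ⟨_, h⟩)
    · exact hv2a h.symm
    · exact hv2b h.symm
  have d2 : s(u1, u2) ≠ s(u2, v2) := by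
    intro heq; rcases Sym2.eq_iff.mp heq with (⟨h, _⟩ | ⟨h, _⟩)
    · exact hu.ne' h
    · exact hv2a h.symm
  have d3 : s(u1, u2) ≠ s(v1, u1) := by
    intro heq; rcases Sym2.eq_iff.mp heq with (⟨h, _⟩ | ⟨_, h⟩)
    · exact hv1a h.symm
    · exact hv1b h.symm
  have e1a : s(u2, v2) ≠ s(u1, u2) := by
    intro heq; rcases Sym2.eq_iff.mp heq with (⟨h, _⟩ | ⟨_, h⟩)
    · exact hu.ne h
    · exact hv2a h
  have e1b : s(u2, v2) ≠ s(v2, v1) := by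
    intro heq; rcases Sym2.eq_iff.mp heq with (⟨h, h'⟩ | ⟨h, _⟩)
    · exact hv2b h.symm
    · exact hv1b h.symm
  have e1c : s(u2, v2) ≠ s(v1, u1) := by
    intro heq; rcases Sym2.eq_iff.mp heq with (⟨h, _⟩ | ⟨h, _⟩)
    · exact hv1b h.symm
    · exact hu.ne h
  have e2a : s(v1, u1) ≠ s(u1, u2) := by
    intro heq; rcases Sym2.eq_iff.mp heq with (⟨h, _⟩ | ⟨h, _⟩)
    · exact hv1a h
    · exact hv1b h
  have e2b : s(v1, u1) ≠ s(v2, v1) := by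
    intro heq; rcases Sym2.eq_iff.mp heq with (⟨h, _⟩ | ⟨_, h⟩)
    · exact hv12 h
    · exact hv2a h.symm
  -- values of G'
  have hval_p : G' s(u1, u2) = G s(u1, u2) - 1 := by
    show G s(u1, u2) - _ - _ + _ + _ = _
    rw [if_pos rfl, if_neg d1, if_neg d2, if_neg d3]; omega
  have hval_e1 : G' s(u2, v2) = G s(u2, v2) + 1 := by
    show G s(u2, v2) - _ - _ + _ + _ = _
    rw [if_neg e1a, if_neg e1b, if_pos rfl, if_neg e1c]; omega
  have hval_e2 : G' s(v1, u1) = 1 := by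
    show G s(v1, u1) - _ - _ + _ + _ = _
    rw [if_neg e2a, if_neg e2b, if_neg (Ne.symm e1c), if_pos rfl, h1]
  -- the key claim
  have claim : ∀ q, NonSimpleAt G' q → q = s(u1, u2) ∨ PairLT q s(u1, u2) := by
    intro q hq
    by_cases hqe1 : q = s(u2, v2)
    · subst hqe1
      have hd : ¬ (s(u2, v2) : Sym2 V).IsDiag := by
        rw [Sym2.mk_isDiag_iff]; exact fun h => hv2b h.symm
      have h2' : 2 ≤ G' s(u2, v2) := hq.resolve_right (fun h => hd h.1)
      rcases h2 with hlt | h0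
      · right; left
        simp only [pmax, Sym2.lift_mk]
        rw [max_eq_left hu.le]
        exact max_lt hu hlt
      · exfalso
        rw [hval_e1, Sym2.eq_swap, h0] at h2'
        omega
    · by_cases hqe2 : q = s(v1, u1)
      · exfalso; subst hqe2
        have hd : ¬ (s(v1, u1) : Sym2 V).IsDiag := by
          rw [Sym2.mk_isDiag_iff]; exact hv1a
        have h2' : 2 ≤ G' s(v1, u1) := hq.resolve_right (fun h => hd h.1)
        rw [hval_e2] at h2'; omega
      · have hle : G' q ≤ G q := by
          show G q - _ - _ + _ + _ ≤ G q
          rw [if_neg (fun h => hqe1 h), if_neg (fun h => hqe2 h)]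
          split_ifs <;> omega
        have hns : NonSimpleAt G q := by
          rcases hq with h | ⟨hd, h1'⟩
          · left; omega
          · right; exact ⟨hd, le_trans h1' hle⟩
        exact hmax.2 q hns
  -- the admissible step
  have hstep : AdmissibleStep G G' :=
    ⟨u1, u2, v2, v1, ⟨hv2a.symm, hv1a.symm, hv2b.symm, hv1b.symm⟩,
      le_trans one_le_two hGp, hvv, Or.inr (Or.inr (Or.inl hGp)), rfl⟩
  refine hmin G' (Relation.ReflTransGen.single hstep) ⟨s(u1, u2), hmax, ?_⟩
  by_cases h2le : 2 ≤ G' s(u1, u2)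
  · right
    refine ⟨⟨Or.inl h2le, fun q hq => claim q hq⟩, ?_⟩
    rw [hval_p]; omega
  · left
    intro q hq
    rcases claim q hq with rfl | h
    · exfalso
      rcases hq with h | ⟨hd, _⟩
      · exact h2le h
      · exact hpd hd
    · exact h
end

section
/- Let G be a non-simple loop-free multigraph, minimal in the sense that no finite sequence of admissible double edge swaps yields a smaller graph, with maximal non-simple edge {u1,u2}, u1 > u2. Then every vertex larger than u1 is adjacent to both u1 and u2, and moreover every such large vertex is adjacent to some ordinary vertex not adjacent to u1 and to some ordinary vertex not adjacent to u2. -/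
open Finset

variable {V : Type*}

/-!
A vertex `w` above both ends of the maximal multiple edge `ab` carries only simple edges. If `w`
were not adjacent to `a`, then every neighbour `x ∉ {a, b}` of `w` must be adjacent to `b`, since
otherwise the admissible swap `ab, xw ↦ bx, wa` lowers `G`; but then `b` dominates `w` edge by
edge and gains the multiple edge `ab` on top, so `deg w < deg b` although `b < w`. Similarly, if
every neighbour `x ∉ {a, b}` of `w` were adjacent to `a`, the edges `ab` (at least two) and `aw`
outweigh `wa` and `wb`, giving `deg w < deg a`.
-/

def SwapMinimal [LinearOrder V] (G : Multigraph V) : Prop :=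
  ∀ G' : Multigraph V, Relation.ReflTransGen AdmissibleStep G G' → ¬ GraphLT G' G

section

variable {G : Multigraph V} {a b z w : V}

lemma LoopFree.nonSimpleAt_iff (hlf : LoopFree G) {p : Sym2 V} :
    NonSimpleAt G p ↔ 2 ≤ G p := by
  refine ⟨fun h => h.resolve_right ?_, Or.inl⟩
  induction p using Sym2.ind with
  | _ x y =>
    rintro ⟨hd, h1⟩
    obtain rfl := Sym2.mk_isDiag_iff.1 hd
    simp [hlf x] at h1

lemma LoopFree.ne_of_two_le (hlf : LoopFree G) (h : 2 ≤ G s(a, b)) : a ≠ b := by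
  rintro rfl
  simp [hlf a] at h

lemma PairLE.pmax_le [LinearOrder V] {p q : Sym2 V} (h : PairLE q p) : pmax q ≤ pmax p := by
  rcases h with rfl | h | ⟨h, _⟩
  exacts [le_rfl, h.le, h.le]

lemma MaxNonSimple.le_one_of_pmax_lt [LinearOrder V] {p : Sym2 V} (hmax : MaxNonSimple G p)
    (hw : pmax p < w) (x : V) : G s(w, x) ≤ 1 := by
  by_contra! h
  exact (hmax.2 s(w, x) (Or.inl h)).pmax_le.not_gt (hw.trans_le (le_max_left w x))

lemma swapped_le_of_ne [DecidableEq V] (G : Multigraph V) {v1 v2 v3 v4 : V} {q : Sym2 V}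
    (h23 : q ≠ s(v2, v3)) (h41 : q ≠ s(v4, v1)) : swapped G v1 v2 v3 v4 q ≤ G q := by
  simp only [swapped, if_neg h23, if_neg h41, add_zero]
  exact (Nat.sub_le _ _).trans (Nat.sub_le _ _)

/-- The two added edges `bz`, `wa` are absent from `G`, so they stay simple: the swap only lowers
the multiplicity of the maximal non-simple edge `ab`, or makes it simple. -/
lemma graphLT_swapped [LinearOrder V] (hlf : LoopFree G) (hmax : MaxNonSimple G s(a, b))
    (hNI : NotIncident a b z w) (hbz : G s(b, z) = 0) (hwa : G s(w, a) = 0) :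
    GraphLT (swapped G a b z w) G := by
  obtain ⟨haz, haw, hbz', hbw⟩ := hNI
  set G' := swapped G a b z w
  have hab : 2 ≤ G s(a, b) := hlf.nonSimpleAt_iff.1 hmax.1
  have hne : a ≠ b := hlf.ne_of_two_le hab
  have hG'ab : G' s(a, b) = G s(a, b) - 1 := by simp [G', swapped, hne, hbw, haz, haw]
  have hG'bz : G' s(b, z) = 1 := by simp [G', swapped, hne.symm, hbz, haz.symm, hbz', hbw]
  have hG'wa : G' s(w, a) = 1 := by simp [G', swapped, hne, hwa, haw.symm, hbw.symm]
  have hlf' : LoopFree G' := fun v => by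
    have hdiag : s(v, v).IsDiag := Sym2.mk_isDiag_iff.2 rfl
    have hle : G' s(v, v) ≤ G s(v, v) := swapped_le_of_ne G
      (fun h => hbz' (Sym2.mk_isDiag_iff.1 (h ▸ hdiag)))
      (fun h => haw (Sym2.mk_isDiag_iff.1 (h ▸ hdiag)).symm)
    simpa [hlf v] using hle
  have hns : ∀ q, 2 ≤ G' q → 2 ≤ G q := by
    intro q hq
    by_cases h1 : q = s(b, z)
    · subst h1; omega
    by_cases h2 : q = s(w, a)
    · subst h2; omega
    exact hq.trans (swapped_le_of_ne G h1 h2)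
  refine ⟨s(a, b), hmax, ?_⟩
  by_cases h3 : 3 ≤ G s(a, b)
  · refine Or.inr ⟨⟨hlf'.nonSimpleAt_iff.2 (by omega), fun q hq => ?_⟩, by omega⟩
    exact hmax.2 q (hlf.nonSimpleAt_iff.2 (hns q (hlf'.nonSimpleAt_iff.1 hq)))
  · refine Or.inl fun q hq => ?_
    have hq2 := hlf'.nonSimpleAt_iff.1 hq
    rcases hmax.2 q (hlf.nonSimpleAt_iff.2 (hns q hq2)) with rfl | hlt
    · omega
    · exact hlt

lemma SwapMinimal.one_le_or_one_le [LinearOrder V] (hmin : SwapMinimal G) (hlf : LoopFree G)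
    (hmax : MaxNonSimple G s(a, b)) (hNI : NotIncident a b z w) (hzw : 1 ≤ G s(z, w)) :
    1 ≤ G s(b, z) ∨ 1 ≤ G s(w, a) := by
  by_contra! h
  have hab : 2 ≤ G s(a, b) := hlf.nonSimpleAt_iff.1 hmax.1
  exact hmin _ (.single ⟨a, b, z, w, hNI, by omega, hzw, .inr (.inr (.inl hab)), rfl⟩)
    (graphLT_swapped hlf hmax hNI (by omega) (by omega))

lemma LoopFree.mdeg_eq_sum [Fintype V] (hlf : LoopFree G) (v : V) :
    mdeg G v = ∑ x, G s(v, x) := by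
  simp [mdeg, hlf v]

lemma LoopFree.mdeg_lt_mdeg [Fintype V] [DecidableEq V] (hlf : LoopFree G) {v : V}
    (s : Finset V) (hle : ∀ x ∉ s, G s(w, x) ≤ G s(v, x))
    (hlt : ∑ x ∈ s, G s(w, x) < ∑ x ∈ s, G s(v, x)) : mdeg G w < mdeg G v := by
  rw [hlf.mdeg_eq_sum, hlf.mdeg_eq_sum, ← s.sum_add_sum_compl, ← s.sum_add_sum_compl]
  exact add_lt_add_of_lt_of_le hlt (sum_le_sum fun x hx => hle x (mem_compl.1 hx))

lemma sum_three [DecidableEq V] {M : Type*} [AddCommMonoid M] (f : V → M) (hab : a ≠ b)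
    (haw : a ≠ w) (hbw : b ≠ w) : ∑ x ∈ ({a, b, w} : Finset V), f x = f a + f b + f w := by
  rw [sum_insert (by simp [hab, haw]), sum_insert (by simp [hbw]), sum_singleton, add_assoc]

variable [Fintype V] [LinearOrder V]

lemma one_le_of_maxNonSimple_of_lt (hlf : LoopFree G)
    (hord : ∀ u v : V, mdeg G u < mdeg G v → u < v) (hmin : SwapMinimal G)
    (hmax : MaxNonSimple G s(a, b)) (ha : a < w) (hb : b < w) : 1 ≤ G s(w, a) := by
  by_contra! hwa
  have hab : 2 ≤ G s(a, b) := hlf.nonSimpleAt_iff.1 hmax.1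
  have hne : a ≠ b := hlf.ne_of_two_le hab
  have hle : ∀ x ∉ ({a, b, w} : Finset V), G s(w, x) ≤ G s(b, x) := by
    intro x hx
    simp only [mem_insert, mem_singleton, not_or] at hx
    obtain ⟨hxa, hxb, -⟩ := hx
    have hwx_le := hmax.le_one_of_pmax_lt (max_lt ha hb) x
    by_cases hx0 : G s(w, x) = 0
    · omega
    have := hmin.one_le_or_one_le hlf hmax ⟨Ne.symm hxa, ha.ne, Ne.symm hxb, hb.ne⟩
      (by rw [Sym2.eq_swap]; omega)
    omega
  have hlt :
      ∑ x ∈ ({a, b, w} : Finset V), G s(w, x) < ∑ x ∈ ({a, b, w} : Finset V), G s(b, x) := by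
    have hwb_le := hmax.le_one_of_pmax_lt (max_lt ha hb) b
    rw [sum_three _ hne ha.ne hb.ne, sum_three _ hne ha.ne hb.ne, Sym2.eq_swap (a := b) (b := a)]
    have := hlf w
    have := hlf b
    omega
  exact lt_asymm hb (hord _ _ (hlf.mdeg_lt_mdeg _ hle hlt))

lemma exists_adj_not_adj_of_maxNonSimple_of_lt (hlf : LoopFree G)
    (hord : ∀ u v : V, mdeg G u < mdeg G v → u < v) (hmin : SwapMinimal G)
    (hmax : MaxNonSimple G s(a, b)) (ha : a < w) (hb : b < w) :
    ∃ x, x ≠ a ∧ x ≠ b ∧ G s(x, a) = 0 ∧ 1 ≤ G s(w, x) := by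
  by_contra! h
  have hwa := one_le_of_maxNonSimple_of_lt hlf hord hmin hmax ha hb
  have hab : 2 ≤ G s(a, b) := hlf.nonSimpleAt_iff.1 hmax.1
  have hne : a ≠ b := hlf.ne_of_two_le hab
  have hle : ∀ x ∉ ({a, b, w} : Finset V), G s(w, x) ≤ G s(a, x) := by
    intro x hx
    simp only [mem_insert, mem_singleton, not_or] at hx
    have hwx_le := hmax.le_one_of_pmax_lt (max_lt ha hb) x
    have := h x hx.1 hx.2.1
    rw [Sym2.eq_swap] at this
    omega
  have hlt :
      ∑ x ∈ ({a, b, w} : Finset V), G s(w, x) < ∑ x ∈ ({a, b, w} : Finset V), G s(a, x) := by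
    have hwa_le := hmax.le_one_of_pmax_lt (max_lt ha hb) a
    have hwb_le := hmax.le_one_of_pmax_lt (max_lt ha hb) b
    rw [sum_three _ hne ha.ne hb.ne, sum_three _ hne ha.ne hb.ne, Sym2.eq_swap (a := a) (b := w)]
    have := hlf w
    have := hlf a
    omega
  exact lt_asymm ha (hord _ _ (hlf.mdeg_lt_mdeg _ hle hlt))

end

/-- Lemma 2: every large vertex is adjacent to both u1 and u2, and is
adjacent to some ordinary vertex not adjacent to u1 and to some ordinary vertex not
adjacent to u2. -/
theorem large_vertices_in_V1_cap_V2 [Fintype V] [LinearOrder V]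
    (G : Multigraph V) (hlf : LoopFree G)
    (hord : ∀ u v : V, mdeg G u < mdeg G v → u < v)
    (hmin : ∀ G' : Multigraph V, Relation.ReflTransGen AdmissibleStep G G' → ¬ GraphLT G' G)
    (u1 u2 : V) (hmax : MaxNonSimple G s(u1, u2)) (hu : u2 < u1)
    (w : V) (hw : u1 < w) :
    1 ≤ G s(w, u1) ∧ 1 ≤ G s(w, u2) ∧
    (∃ x : V, x ≠ u1 ∧ x ≠ u2 ∧ G s(x, u1) = 0 ∧ 1 ≤ G s(w, x)) ∧
    (∃ x : V, x ≠ u1 ∧ x ≠ u2 ∧ G s(x, u2) = 0 ∧ 1 ≤ G s(w, x)) := by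
  have hmax' : MaxNonSimple G s(u2, u1) := Sym2.eq_swap (a := u1) ▸ hmax
  have hu2 : u2 < w := hu.trans hw
  obtain ⟨x, hx2, hx1, hx0, hwx⟩ :=
    exists_adj_not_adj_of_maxNonSimple_of_lt hlf hord hmin hmax' hu2 hw
  exact ⟨one_le_of_maxNonSimple_of_lt hlf hord hmin hmax hw hu2,
    one_le_of_maxNonSimple_of_lt hlf hord hmin hmax' hu2 hw,
    exists_adj_not_adj_of_maxNonSimple_of_lt hlf hord hmin hmax hw hu2,
    ⟨x, hx1, hx2, hx0, hwx⟩⟩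
end

section
/- Let G be a non-simple loop-free multigraph, minimal under admissible double edge swaps, with maximal non-simple edge {u1,u2}, u1 > u2. Then any ordinary vertex adjacent to a small vertex is adjacent to every large vertex other than itself. -/
open Finset

variable {V : Type*}

section AuxLemmas

variable {V : Type*}

private lemma nonsimple_mono {G G' : Multigraph V} {q : Sym2 V} (h : G' q ≤ G q)
    (hn : NonSimpleAt G' q) : NonSimpleAt G q := by
  rcases hn with h2 | ⟨hd, h1⟩
  · exact Or.inl (h2.trans h)
  · exact Or.inr ⟨hd, h1.trans h⟩

private lemma swapped_le' [DecidableEq V] (G : Multigraph V) (v1 v2 v3 v4 : V) (e : Sym2 V)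
    (h1 : e ≠ s(v2, v3)) (h2 : e ≠ s(v4, v1)) : swapped G v1 v2 v3 v4 e ≤ G e := by
  simp only [swapped, if_neg h1, if_neg h2, add_zero]
  exact (Nat.sub_le _ _).trans (Nat.sub_le _ _)

private lemma pmax_mk [LinearOrder V] (x y : V) : pmax s(x, y) = max x y := by
  simp [pmax]

private lemma pmin_mk [LinearOrder V] (x y : V) : pmin s(x, y) = min x y := by
  simp [pmin]

private lemma pairlt_low [LinearOrder V] {x y u1 u2 : V} (hx : x < u1) (hy : y < u1)
    (hu : u2 < u1) : PairLT s(x, y) s(u1, u2) := by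
  left
  rw [pmax_mk, pmax_mk, max_eq_left hu.le]
  exact max_lt hx hy

private lemma graphlt_of [LinearOrder V] {G G2 : Multigraph V} {u1 u2 : V} (hu : u2 < u1)
    (hmax : MaxNonSimple G s(u1, u2)) (hdec : G2 s(u1, u2) < G s(u1, u2))
    (hq : ∀ q, NonSimpleAt G2 q → PairLE q s(u1, u2)) : GraphLT G2 G := by
  by_cases h2 : 2 ≤ G2 s(u1, u2)
  · exact ⟨s(u1, u2), hmax, Or.inr ⟨⟨Or.inl h2, hq⟩, hdec⟩⟩
  · refine ⟨s(u1, u2), hmax, Or.inl fun q hq' => ?_⟩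
    rcases hq q hq' with h | h
    · exfalso
      rcases h ▸ hq' with h' | ⟨hd, -⟩
      · exact h2 h'
      · exact ne_of_gt hu (Sym2.mk_isDiag_iff.mp hd)
    · exact h

end AuxLemmas

/-- Lemma 4: any ordinary vertex adjacent to a small vertex is adjacent
to every large vertex other than itself. -/
theorem adjacent_to_small_implies_adjacent_to_large [Fintype V] [LinearOrder V]
    (G : Multigraph V) (hlf : LoopFree G)
    (hord : ∀ u v : V, mdeg G u < mdeg G v → u < v)
    (hmin : ∀ G' : Multigraph V, Relation.ReflTransGen AdmissibleStep G G' → ¬ GraphLT G' G)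
    (u1 u2 : V) (hmax : MaxNonSimple G s(u1, u2)) (hu : u2 < u1)
    (a b c : V) (hau1 : a ≠ u1) (hau2 : a ≠ u2)
    (hbu1 : b ≠ u1) (hbu2 : b ≠ u2) (hbsmall : b < u1) (hab : 1 ≤ G s(a, b))
    (hc : u1 < c) (hca : c ≠ a) :
    1 ≤ G s(a, c) := by
  classical
  by_contra hac0
  have hac : G s(a, c) = 0 := by omega
  -- vertex disequality stock
  have hu1u2 : u1 ≠ u2 := ne_of_gt hu
  have hu2u1 : u2 ≠ u1 := ne_of_lt hu
  have hu1a : u1 ≠ a := hau1.symm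
  have hu2a : u2 ≠ a := hau2.symm
  have hu1b : u1 ≠ b := hbu1.symm
  have hu2b : u2 ≠ b := hbu2.symm
  have habne : a ≠ b := by
    rintro rfl
    rw [hlf a] at hab
    omega
  have hbane : b ≠ a := habne.symm
  have hacne : a ≠ c := hca.symm
  have hcu1 : c ≠ u1 := ne_of_gt hc
  have hu1c : u1 ≠ c := ne_of_lt hc
  have hcu2 : c ≠ u2 := ne_of_gt (hu.trans hc)
  have hu2c : u2 ≠ c := ne_of_lt (hu.trans hc)
  have hcb : c ≠ b := ne_of_gt (hbsmall.trans hc)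
  have hbc : b ≠ c := ne_of_lt (hbsmall.trans hc)
  -- basic facts
  have hM : 2 ≤ G s(u1, u2) := by
    rcases hmax.1 with h | ⟨hd, -⟩
    · exact h
    · exact absurd (Sym2.mk_isDiag_iff.mp hd) hu1u2
  have hcle : ∀ x : V, G s(c, x) ≤ 1 := by
    intro x
    by_contra h
    push_neg at h
    rcases hmax.2 _ (Or.inl h) with heq | hlt
    · rcases Sym2.eq_iff.mp heq with ⟨h1, -⟩ | ⟨h1, -⟩
      · exact hcu1 h1
      · exact hcu2 h1
    · rcases hlt with hl | ⟨hl, -⟩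
      · rw [pmax_mk, pmax_mk, max_eq_left hu.le] at hl
        exact absurd ((le_max_left c x).trans_lt hl) (not_lt_of_gt hc)
      · rw [pmax_mk, pmax_mk, max_eq_left hu.le] at hl
        exact absurd (hl ▸ le_max_left c x) (not_le_of_gt hc)
  -- the first swap (always admissible)
  have step1 : AdmissibleStep G (swapped G u2 u1 a b) := by
    refine ⟨u2, u1, a, b, ⟨hu2a, hu2b, hu1a, hu1b⟩, ?_, hab, ?_, rfl⟩
    · rw [show s(u2, u1) = s(u1, u2) from Sym2.eq_swap]; omega
    · exact Or.inr (Or.inr (Or.inl (by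
        rw [show s(u2, u1) = s(u1, u2) from Sym2.eq_swap]; exact hM)))
  have hG1P0 : swapped G u2 u1 a b s(u1, u2) = G s(u1, u2) - 1 := by
    simp [swapped, Sym2.eq_iff, hu1a, hu2a, hu1b, hu2b, hu1u2, hu2u1, hau1, hau2, hbu1, hbu2]
  have hG1ua : swapped G u2 u1 a b s(u1, a) = G s(u1, a) + 1 := by
    simp [swapped, Sym2.eq_iff, hu1a, hu2a, hu1b, hu2b, hu1u2, hu2u1, hau1, hau2, hbu1, hbu2,
      habne, hbane]
  -- Step 1: a is adjacent to u1
  have hP1a : 1 ≤ G s(u1, a) := by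
    by_contra h0
    have hua0 : G s(u1, a) = 0 := by omega
    refine hmin _ (Relation.ReflTransGen.single step1) ?_
    refine graphlt_of hu hmax (by rw [hG1P0]; omega) ?_
    intro q hns
    by_cases hA : q = s(u1, a)
    · exfalso
      rw [hA] at hns
      rcases hns with h2 | ⟨hd, -⟩
      · rw [hG1ua, hua0] at h2; omega
      · exact hu1a (Sym2.mk_isDiag_iff.mp hd)
    · by_cases hB : q = s(b, u2)
      · exact Or.inr (hB ▸ pairlt_low hbsmall hu hu)
      · exact hmax.2 _ (nonsimple_mono (swapped_le' G u2 u1 a b q hA hB) hns)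
  -- Step 2: every neighbor x ∉ {u1,u2} of c is adjacent to u1
  have hstep2 : ∀ x : V, x ≠ u1 → x ≠ u2 → 1 ≤ G s(c, x) → 1 ≤ G s(u1, x) := by
    intro x hxu1 hxu2 hcx
    by_contra h0
    have hux0 : G s(u1, x) = 0 := by omega
    have hu1x : u1 ≠ x := hxu1.symm
    have hu2x : u2 ≠ x := hxu2.symm
    have hxc : x ≠ c := by
      intro h
      rw [h, hlf c] at hcx
      omega
    have hcx' : c ≠ x := hxc.symm
    have hxa : x ≠ a := by
      intro h
      rw [h, show s(c, a) = s(a, c) from Sym2.eq_swap, hac] at hcx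
      omega
    have hax : a ≠ x := hxa.symm
    set G1 : Multigraph V := swapped G u2 u1 a b with hG1def
    have hG1cx : G1 s(c, x) = G s(c, x) := by
      simp [hG1def, swapped, Sym2.eq_iff, hcu1, hcu2, hca, hcb, hxu1, hxu2, hxa,
        hu1c, hu2c, hacne, hbc, hu1x, hu2x, hax]
    set G2 : Multigraph V := swapped G1 u1 a c x with hG2def
    have step2 : AdmissibleStep G1 G2 := by
      refine ⟨u1, a, c, x, ⟨hu1c, hu1x, hacne, hax⟩, ?_, ?_, ?_, rfl⟩
      · rw [hG1ua]; omega
      · rw [hG1cx]; exact hcx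
      · exact Or.inr (Or.inr (Or.inl (by rw [hG1ua]; omega)))
    have hreach : Relation.ReflTransGen AdmissibleStep G G2 :=
      (Relation.ReflTransGen.single step1).tail step2
    refine hmin _ hreach ?_
    have hG2P0 : G2 s(u1, u2) = G1 s(u1, u2) := by
      simp [hG2def, swapped, Sym2.eq_iff, hu1a, hu2a, hu1c, hu2c, hu1x, hu2x,
        hau2, hu1u2, hcu2, hxu2, hacne, hca]
    refine graphlt_of hu hmax (by rw [hG2P0, hG1P0]; omega) ?_
    intro q hns
    by_cases h1 : q = s(x, u1)
    · exfalso
      have hG1xu1 : G1 s(x, u1) = G s(x, u1) := by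
        simp [hG1def, swapped, Sym2.eq_iff, hxu1, hxu2, hxa, hu1a, hu1b, hu1u2, hu2u1,
          hau1, hbu1, hxc]
      have hG2xu1 : G2 s(x, u1) = G1 s(x, u1) + 1 := by
        simp [hG2def, swapped, Sym2.eq_iff, hxu1, hxa, hxc, hu1a, hu1c, hcu1, hax]
      have hzero : G s(x, u1) = 0 := by
        rw [show s(x, u1) = s(u1, x) from Sym2.eq_swap]; exact hux0
      rw [h1] at hns
      rcases hns with h2 | ⟨hd, -⟩
      · rw [hG2xu1, hG1xu1, hzero] at h2; omega
      · exact hxu1 (Sym2.mk_isDiag_iff.mp hd)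
    · by_cases h2 : q = s(a, c)
      · exfalso
        have hG1ac : G1 s(a, c) = G s(a, c) := by
          simp [hG1def, swapped, Sym2.eq_iff, hacne, hau1, hau2, hca, hcu1, hcu2,
            habne, hcb, hu1a]
        have hG2ac : G2 s(a, c) = G1 s(a, c) + 1 := by
          simp [hG2def, swapped, Sym2.eq_iff, hacne, hau1, hca, hax, hxa, hcx', hxc, hu1a, hcu1, hu1c]
        rw [h2] at hns
        rcases hns with h3 | ⟨hd, -⟩
        · rw [hG2ac, hG1ac, hac] at h3; omega
        · exact hacne (Sym2.mk_isDiag_iff.mp hd)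
      · by_cases h3 : q = s(b, u2)
        · exact Or.inr (h3 ▸ pairlt_low hbsmall hu hu)
        · by_cases h4 : q = s(u1, a)
          · have hG2ua : G2 s(u1, a) = G1 s(u1, a) - 1 := by
              simp [hG2def, swapped, Sym2.eq_iff, hu1a, hu1c, hu1x, hau1, hacne, hca,
                hax, hxa, hu1u2]
            have hle : G2 s(u1, a) ≤ G s(u1, a) := by rw [hG2ua, hG1ua]; omega
            exact hmax.2 _ (nonsimple_mono (h4 ▸ hle) (h4 ▸ hns))
          · have hle1 : G2 q ≤ G1 q := swapped_le' G1 u1 a c x q h2 h1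
            have hle2 : G1 q ≤ G q := swapped_le' G u2 u1 a b q h4 h3
            exact hmax.2 _ (nonsimple_mono (hle1.trans hle2) hns)
  -- Counting
  set T : Finset V := Finset.univ.filter (fun x => x ≠ u1 ∧ x ≠ u2 ∧ 1 ≤ G s(c, x)) with hT
  have hTsub : ∀ x ∈ T, 1 ≤ G s(u1, x) := by
    intro x hx
    rw [hT, Finset.mem_filter] at hx
    exact hstep2 x hx.2.1 hx.2.2.1 hx.2.2.2
  have haT : a ∉ T := by
    rw [hT, Finset.mem_filter]
    rintro ⟨-, -, -, h⟩
    rw [show s(c, a) = s(a, c) from Sym2.eq_swap, hac] at h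
    omega
  have hu2T : u2 ∉ T := by
    rw [hT, Finset.mem_filter]
    rintro ⟨-, -, h, -⟩
    exact h rfl
  have hu2ins : u2 ∉ insert a T := by
    rw [Finset.mem_insert]
    rintro (h | h)
    · exact hu2a h
    · exact hu2T h
  have hdegu1 : mdeg G u1 = ∑ u : V, G s(u1, u) := by
    simp [mdeg, hlf u1]
  have hdegc : mdeg G c = ∑ u : V, G s(c, u) := by
    simp [mdeg, hlf c]
  have hlow : G s(u1, u2) + (1 + T.card) ≤ ∑ u : V, G s(u1, u) := by
    have h1 : ∑ x ∈ insert u2 (insert a T), G s(u1, x) ≤ ∑ u : V, G s(u1, u) :=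
      Finset.sum_le_sum_of_subset (Finset.subset_univ _)
    rw [Finset.sum_insert hu2ins, Finset.sum_insert haT] at h1
    have h2 : (T.card : ℕ) = ∑ _x ∈ T, 1 := by
      rw [Finset.sum_const, smul_eq_mul, mul_one]
    have h3 : ∑ _x ∈ T, (1 : ℕ) ≤ ∑ x ∈ T, G s(u1, x) :=
      Finset.sum_le_sum fun x hx => hTsub x hx
    have h4 := hP1a
    linarith
  have hup : ∑ u : V, G s(c, u) ≤ T.card + 2 := by
    have hpt : ∀ u : V, G s(c, u) ≤ if u ∈ insert u1 (insert u2 T) then 1 else 0 := by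
      intro u
      by_cases h : u ∈ insert u1 (insert u2 T)
      · rw [if_pos h]; exact hcle u
      · rw [if_neg h]
        simp only [Finset.mem_insert] at h
        push_neg at h
        obtain ⟨h1, h2, h3⟩ := h
        by_contra hcon
        push_neg at hcon
        exact h3 (by
          rw [hT, Finset.mem_filter]
          exact ⟨Finset.mem_univ u, h1, h2, hcon⟩)
    have h5 : ∑ u : V, G s(c, u) ≤ ∑ u : V, (if u ∈ insert u1 (insert u2 T) then 1 else 0) :=
      Finset.sum_le_sum fun u _ => hpt u
    have h6 : ∑ u : V, (if u ∈ insert u1 (insert u2 T) then (1 : ℕ) else 0)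
        = (insert u1 (insert u2 T)).card := by
      rw [Finset.sum_ite_mem, Finset.univ_inter, Finset.sum_const, smul_eq_mul, mul_one]
    have h7 : (insert u1 (insert u2 T)).card ≤ T.card + 2 := by
      have i1 := Finset.card_insert_le u1 (insert u2 T)
      have i2 := Finset.card_insert_le u2 T
      omega
    omega
  have hmono : mdeg G u1 ≤ mdeg G c :=
    le_of_not_gt fun hlt => absurd (hord c u1 hlt) (not_lt_of_gt hc)
  rw [hdegu1, hdegc] at hmono
  omega
end
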